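/- arXiv:1806.01250 — 8 statements merged into one kernel-verified Lean document; each statement's English description precedes it below -/
import Mathlib

section
/- Let p + V be an affine k-dimensional subspace of a Banach space X, and let {B_{r_i}(x_i)}_{i∈I} be a family of pairwise disjoint balls with r_i ≤ R, x_i ∈ B_R(p), and d(x_i, p + V) < r_i/2 for every i. Then Σ_{i∈I} r_i^k ≤ c(k) R^k for a constant c(k) depending only on k, not on the dimension of X. -/
open Metric MeasureTheory Module

/-!
Pick for each ball a point `p + vᵢ` of the plane with `‖xᵢ - (p + vᵢ)‖ < rᵢ / 2`. Then the
balls of radius `rᵢ / 2` about `vᵢ` inside `V` are translated by `p` into the original balls,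
so they are pairwise disjoint, and they all lie in the ball of radius `2R` about `0` in `V`.
Comparing Haar volumes in the `k`-dimensional space `V`, where balls scale like `radiusᵏ`,
gives `∑ (rᵢ / 2)ᵏ ≤ (2R)ᵏ`, whatever the dimension of `X`.
-/

theorem sum_pow_finrank_le_of_pairwiseDisjoint_ball {E ι : Type*} [NormedAddCommGroup E]
    [NormedSpace ℝ E] [FiniteDimensional ℝ E] {s : Finset ι} {c : ι → E} {ρ : ι → ℝ} {z : E}
    {T : ℝ} (hρ : ∀ i ∈ s, 0 < ρ i) (hT : 0 < T)
    (hdisj : (s : Set ι).PairwiseDisjoint fun i => ball (c i) (ρ i))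
    (hsub : ∀ i ∈ s, ball (c i) (ρ i) ⊆ ball z T) :
    ∑ i ∈ s, ρ i ^ finrank ℝ E ≤ T ^ finrank ℝ E := by
  borelize E
  let μ : Measure E := Measure.addHaar
  have key : (∑ i ∈ s, ENNReal.ofReal (ρ i ^ finrank ℝ E)) * μ (ball 0 1)
      ≤ ENNReal.ofReal (T ^ finrank ℝ E) * μ (ball 0 1) :=
    calc (∑ i ∈ s, ENNReal.ofReal (ρ i ^ finrank ℝ E)) * μ (ball 0 1)
        = ∑ i ∈ s, μ (ball (c i) (ρ i)) := by
          rw [Finset.sum_mul]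
          exact Finset.sum_congr rfl fun i hi => (Measure.addHaar_ball_of_pos μ _ (hρ i hi)).symm
      _ = μ (⋃ i ∈ s, ball (c i) (ρ i)) :=
          (measure_biUnion_finset hdisj fun _ _ => measurableSet_ball).symm
      _ ≤ μ (ball z T) := measure_mono (Set.iUnion₂_subset hsub)
      _ = ENNReal.ofReal (T ^ finrank ℝ E) * μ (ball 0 1) := Measure.addHaar_ball_of_pos μ z hT
  rw [ENNReal.mul_le_mul_iff_left (measure_ball_pos μ 0 one_pos).ne' measure_ball_lt_top.ne,
    ← ENNReal.ofReal_sum_of_nonneg fun i hi => (pow_pos (hρ i hi) _).le] at key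
  exact (ENNReal.ofReal_le_ofReal_iff (by positivity)).1 key

theorem exists_mem_submodule_dist_add_lt_of_infDist_lt {X : Type*} [NormedAddCommGroup X]
    [Module ℝ X] {V : Submodule ℝ X} {p x : X} {t : ℝ}
    (h : infDist x ((fun w => p + w) '' (V : Set X)) < t) : ∃ v ∈ V, dist x (p + v) < t := by
  obtain ⟨_, ⟨v, hv, rfl⟩, hdist⟩ := (infDist_lt_iff (Set.Nonempty.image _ ⟨0, V.zero_mem⟩)).1 h
  exact ⟨v, hv, hdist⟩

theorem sum_pow_finrank_le_of_disjoint_balls_near_affine_plane {X ι : Type*}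
    [NormedAddCommGroup X] [NormedSpace ℝ X] (V : Submodule ℝ X) [FiniteDimensional ℝ V]
    {p : X} {R : ℝ} (hR : 0 < R) {x : ι → X} {r : ι → ℝ} (hr : ∀ i, 0 < r i ∧ r i ≤ R)
    (hx : ∀ i, x i ∈ closedBall p R)
    (hd : ∀ i, infDist (x i) ((fun w => p + w) '' (V : Set X)) < r i / 2)
    (hdisj : Pairwise fun i j => Disjoint (ball (x i) (r i)) (ball (x j) (r j)))
    (s : Finset ι) :
    ∑ i ∈ s, r i ^ finrank ℝ V ≤ 4 ^ finrank ℝ V * R ^ finrank ℝ V := by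
  choose v hvV hvd using fun i => exists_mem_submodule_dist_add_lt_of_infDist_lt (hd i)
  let u : ι → V := fun i => ⟨v i, hvV i⟩
  have hball : ∀ i, ∀ w ∈ ball (u i) (r i / 2), p + (w : X) ∈ ball (x i) (r i) := by
    intro i w hw
    rw [mem_ball] at hw ⊢
    calc dist (p + (w : X)) (x i) ≤ dist (p + (w : X)) (p + v i) + dist (p + v i) (x i) :=
          dist_triangle _ _ _
      _ < r i / 2 + r i / 2 := by
          rw [dist_add_left, dist_comm (p + v i)]
          exact add_lt_add hw (hvd i)
      _ = r i := add_halves _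
  have hdisjV : (s : Set ι).PairwiseDisjoint fun i => ball (u i) (r i / 2) :=
    fun i _ j _ hij => Set.disjoint_left.2 fun w hwi hwj =>
      (hdisj hij).ne_of_mem (hball i w hwi) (hball j w hwj) rfl
  have hsub : ∀ i ∈ s, ball (u i) (r i / 2) ⊆ ball 0 (2 * R) := by
    intro i _ w hw
    rw [mem_ball_zero_iff, ← Submodule.norm_coe, ← dist_self_add_left (w : X) p]
    calc dist (p + (w : X)) p ≤ dist (p + (w : X)) (x i) + dist (x i) p := dist_triangle _ _ _
      _ < r i + R := add_lt_add_of_lt_of_le (mem_ball.1 (hball i w hw)) (mem_closedBall.1 (hx i))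
      _ ≤ 2 * R := by linarith [(hr i).2]
  have hhalf := sum_pow_finrank_le_of_pairwiseDisjoint_ball (fun i _ => half_pos (hr i).1)
    (by positivity) hdisjV hsub
  simp only [div_pow, ← Finset.sum_div, div_le_iff₀ (by positivity : (0 : ℝ) < 2 ^ finrank ℝ V)]
    at hhalf
  calc ∑ i ∈ s, r i ^ finrank ℝ V ≤ (2 * R) ^ finrank ℝ V * 2 ^ finrank ℝ V := hhalf
    _ = 4 ^ finrank ℝ V * R ^ finrank ℝ V := by rw [mul_pow, mul_right_comm, ← mul_pow]; norm_num

/-- Disjoint balls lying close to a `k`-dimensional affine plane in a Banach space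
admit a `k`-dimensional packing bound, with a constant depending only on `k`. -/
theorem packing_near_affine_plane (k : ℕ) :
    ∃ c : ℝ, 0 < c ∧
      ∀ (X : Type) [NormedAddCommGroup X] [NormedSpace ℝ X] [CompleteSpace X]
        (V : Submodule ℝ X), FiniteDimensional ℝ V → Module.finrank ℝ V = k →
        ∀ (p : X) (R : ℝ), 0 < R →
        ∀ (ι : Type) (x : ι → X) (r : ι → ℝ),
          (∀ i, 0 < r i ∧ r i ≤ R) →
          (∀ i, x i ∈ closedBall p R) →
          (∀ i, Metric.infDist (x i) ((fun w => p + w) '' (V : Set X)) < r i / 2) →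
          (Pairwise fun i j => Disjoint (ball (x i) (r i)) (ball (x j) (r j))) →
          ∀ s : Finset ι, ∑ i ∈ s, r i ^ k ≤ c * R ^ k := by
  refine ⟨4 ^ k, by positivity, ?_⟩
  rintro X _ _ _ V _ rfl p R hR ι x r hr hx hd hdisj s
  exact sum_pow_finrank_le_of_disjoint_balls_near_affine_plane V hR hr hx hd hdisj s
end

section
/- Suppose v_1,...,v_k are vectors in τ-general position in a Banach space X, and w_1,...,w_k satisfy ‖w_i − v_i‖ < ε for all i. Then the vectors w_1,...,w_k are in (τ − c(k,τ)ε)-general position, for a constant c(k,τ) depending only on k and τ. -/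
/-- Vectors `v 0, …, v (k-1)` in a normed space are in `τ`-general position. -/
def InGenPos {X : Type} [NormedAddCommGroup X] [NormedSpace ℝ X]
    (τ : ℝ) {k : ℕ} (v : Fin k → X) : Prop :=
  (∀ i, τ ≤ ‖v i‖ ∧ ‖v i‖ ≤ τ⁻¹) ∧
  ∀ i : Fin k, τ ≤ Metric.infDist (v i)
      (Submodule.span ℝ (v '' {j | j < i}) : Set X)

private lemma le_infDist_aux {X : Type} [NormedAddCommGroup X] {s : Set X} {x : X} {b : ℝ}
    (hs : s.Nonempty) (h : ∀ y ∈ s, b ≤ dist x y) : b ≤ Metric.infDist x s := by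
  by_contra hlt
  push_neg at hlt
  rw [Metric.infDist_lt_iff hs] at hlt
  obtain ⟨y, hy, hd⟩ := hlt
  exact absurd (h y hy) (not_le.mpr hd)

set_option maxHeartbeats 1000000 in
/-- Key approximation lemma: every element of the span of the perturbed vectors
is close (proportionally to its norm) to an element of the span of the originals. -/
private lemma approx_span {X : Type} [NormedAddCommGroup X] [NormedSpace ℝ X]
    {k : ℕ} {τ ε : ℝ} (hτ0 : 0 < τ) (hτ1 : τ < 1) (hε0 : 0 < ε)
    {v w : Fin k → X} (hv : InGenPos τ v) (hw : ∀ i, ‖w i - v i‖ < ε)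
    {A L : ℝ} (hA : A = 4 / τ) (hL : L = 2 + A * (τ⁻¹ + 1))
    (hε1 : ε ≤ τ / 4)
    (hεK : ε * (A * L ^ k) * (τ⁻¹ + 1) ≤ τ / 4) :
    ∀ m : ℕ, ∀ x ∈ (Submodule.span ℝ (w '' {j : Fin k | (j : ℕ) < m}) : Set X),
      ∃ x' ∈ (Submodule.span ℝ (v '' {j : Fin k | (j : ℕ) < m}) : Set X),
        ‖x - x'‖ ≤ A * L ^ m * ε * ‖x‖ := by
  have hA0 : 0 < A := by rw [hA]; positivity
  have hτi0 : 0 < τ⁻¹ := inv_pos.mpr hτ0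
  have hττ : τ * τ⁻¹ = 1 := mul_inv_cancel₀ hτ0.ne'
  have hτi1 : 1 ≤ τ⁻¹ := by nlinarith [mul_pos (by linarith : (0:ℝ) < 1 - τ) hτi0]
  have hL1 : 1 ≤ L := by
    rw [hL]
    have : 0 ≤ A * (τ⁻¹ + 1) := by positivity
    linarith
  have hL0 : 0 < L := lt_of_lt_of_le one_pos hL1
  intro m
  induction m with
  | zero =>
    intro x hx
    have hset : {j : Fin k | (j : ℕ) < 0} = (∅ : Set (Fin k)) := by
      ext j; simp
    rw [hset] at hx
    simp only [Set.image_empty, Submodule.span_empty, SetLike.mem_coe,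
      Submodule.mem_bot] at hx
    subst hx
    refine ⟨0, by simp [Submodule.zero_mem], by simp⟩
  | succ m IH =>
    intro x hx
    by_cases hm : m < k
    · -- main case
      have hset : {j : Fin k | (j : ℕ) < m + 1}
          = insert (⟨m, hm⟩ : Fin k) {j : Fin k | (j : ℕ) < m} := by
        ext j
        simp only [Set.mem_setOf_eq, Set.mem_insert_iff, Fin.ext_iff]
        omega
      rw [hset, Set.image_insert_eq, Submodule.span_insert] at hx
      obtain ⟨p, hp, q, hq, hpq⟩ := Submodule.mem_sup.mp hx
      obtain ⟨a, rfl⟩ := Submodule.mem_span_singleton.mp hp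
      obtain ⟨y', hy'mem, hy'⟩ := IH q hq
      obtain ⟨Km, hKm⟩ : ∃ t : ℝ, t = A * L ^ m := ⟨_, rfl⟩
      rw [← hKm] at hy'
      have hKm0 : 0 ≤ Km := by rw [hKm]; positivity
      have hKmK : Km ≤ A * L ^ k := by
        rw [hKm]
        exact mul_le_mul_of_nonneg_left (pow_le_pow_right₀ hL1 hm.le) hA0.le
      have hεKm : Km * ε * (τ⁻¹ + 1) ≤ τ / 4 := by
        have h2 : ε * Km ≤ ε * (A * L ^ k) := mul_le_mul_of_nonneg_left hKmK hε0.le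
        have h3 : (0:ℝ) ≤ τ⁻¹ + 1 := by positivity
        have h1 : ε * Km * (τ⁻¹ + 1) ≤ ε * (A * L ^ k) * (τ⁻¹ + 1) :=
          mul_le_mul_of_nonneg_right h2 h3
        linarith only [h1, hεK]
      have hKmε1 : Km * ε ≤ 1 := by
        linarith only [hεKm, mul_nonneg (mul_nonneg hKm0 hε0.le) hτi0.le, hτ1, hτ0]
      -- basic norm facts
      have hwim : ‖w ⟨m, hm⟩‖ ≤ τ⁻¹ + 1 := by
        have h1 := hw ⟨m, hm⟩
        have h2 := (hv.1 ⟨m, hm⟩).2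
        have h3 : ‖w ⟨m, hm⟩‖ - ‖v ⟨m, hm⟩‖ ≤ ‖w ⟨m, hm⟩ - v ⟨m, hm⟩‖ :=
          (abs_le.mp (abs_norm_sub_norm_le (w ⟨m, hm⟩) (v ⟨m, hm⟩))).2
        linarith only [h1, h2, h3, hε1, hτ1, hτ0]
      -- approximation error
      have herr : ‖x - (a • v ⟨m, hm⟩ + y')‖ ≤ |a| * ε + Km * ε * ‖q‖ := by
        have hxe : x - (a • v ⟨m, hm⟩ + y') = a • (w ⟨m, hm⟩ - v ⟨m, hm⟩) + (q - y') := by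
          rw [← hpq]; module
        have h1 : ‖a • (w ⟨m, hm⟩ - v ⟨m, hm⟩) + (q - y')‖
            ≤ ‖a • (w ⟨m, hm⟩ - v ⟨m, hm⟩)‖ + ‖q - y'‖ := norm_add_le _ _
        rw [norm_smul, Real.norm_eq_abs] at h1
        have h2 : |a| * ‖w ⟨m, hm⟩ - v ⟨m, hm⟩‖ ≤ |a| * ε :=
          mul_le_mul_of_nonneg_left (hw ⟨m, hm⟩).le (abs_nonneg a)
        rw [hxe]
        linarith only [h1, h2, hy']
      -- lower bound from general position
      have hlow : |a| * τ ≤ ‖a • v ⟨m, hm⟩ + y'‖ := by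
        rcases eq_or_ne a 0 with rfl | ha
        · simp only [abs_zero, zero_mul, zero_smul, zero_add]
          exact norm_nonneg _
        · have hmem : (-(a⁻¹) • y') ∈
              (Submodule.span ℝ (v '' {j : Fin k | (j : ℕ) < m}) : Set X) :=
            Submodule.smul_mem _ _ hy'mem
          have hseteq : {j : Fin k | j < (⟨m, hm⟩ : Fin k)} = {j : Fin k | (j : ℕ) < m} := by
            ext j; simp [Fin.lt_def]
          have hinf := hv.2 ⟨m, hm⟩
          rw [hseteq] at hinf
          have hd : τ ≤ dist (v ⟨m, hm⟩) (-(a⁻¹) • y') :=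
            le_trans hinf (Metric.infDist_le_dist_of_mem hmem)
          rw [dist_eq_norm] at hd
          have hne : v ⟨m, hm⟩ - -(a⁻¹) • y' = v ⟨m, hm⟩ + a⁻¹ • y' := by module
          rw [hne] at hd
          have hfac : a • (v ⟨m, hm⟩ + a⁻¹ • y') = a • v ⟨m, hm⟩ + y' := by
            rw [smul_add, smul_smul, mul_inv_cancel₀ ha, one_smul]
          have h1 : |a| * τ ≤ |a| * ‖v ⟨m, hm⟩ + a⁻¹ • y'‖ :=
            mul_le_mul_of_nonneg_left hd (abs_nonneg a)
          calc |a| * τ ≤ |a| * ‖v ⟨m, hm⟩ + a⁻¹ • y'‖ := h1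
            _ = ‖a • (v ⟨m, hm⟩ + a⁻¹ • y')‖ := by rw [norm_smul, Real.norm_eq_abs]
            _ = ‖a • v ⟨m, hm⟩ + y'‖ := by rw [hfac]
      -- bound on ‖q‖
      have hq3 : ‖q‖ ≤ ‖x‖ + |a| * (τ⁻¹ + 1) := by
        have hqe : q = x - a • w ⟨m, hm⟩ := by rw [← hpq]; abel
        have h1 : ‖q‖ ≤ ‖x‖ + ‖a • w ⟨m, hm⟩‖ := by
          rw [hqe]; exact norm_sub_le _ _
        rw [norm_smul, Real.norm_eq_abs] at h1
        have h2 : |a| * ‖w ⟨m, hm⟩‖ ≤ |a| * (τ⁻¹ + 1) :=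
          mul_le_mul_of_nonneg_left hwim (abs_nonneg a)
        linarith only [h1, h2]
      -- lower bound on ‖x‖
      have hb : ‖a • v ⟨m, hm⟩ + y'‖ ≤ ‖x‖ + ‖x - (a • v ⟨m, hm⟩ + y')‖ := by
        have h := norm_sub_le x (x - (a • v ⟨m, hm⟩ + y'))
        rwa [sub_sub_cancel] at h
      have hxlow : |a| * τ ≤ ‖x‖ + (|a| * ε + Km * ε * ‖q‖) := by
        linarith only [hlow, herr, hb]
      have e1 : Km * ε * ‖q‖ ≤ Km * ε * (‖x‖ + |a| * (τ⁻¹ + 1)) :=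
        mul_le_mul_of_nonneg_left hq3 (mul_nonneg hKm0 hε0.le)
      -- bound on |a|
      have ha_bound : |a| ≤ A * ‖x‖ := by
        have p1 : |a| * ε ≤ |a| * (τ / 4) := mul_le_mul_of_nonneg_left hε1 (abs_nonneg a)
        have p2 : |a| * (Km * ε * (τ⁻¹ + 1)) ≤ |a| * (τ / 4) :=
          mul_le_mul_of_nonneg_left hεKm (abs_nonneg a)
        have p3 : Km * ε * ‖x‖ ≤ 1 * ‖x‖ :=
          mul_le_mul_of_nonneg_right hKmε1 (norm_nonneg x)
        rw [hA, div_mul_eq_mul_div, le_div_iff₀ hτ0]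
        linarith only [hxlow, e1, p1, p2, p3]
      refine ⟨a • v ⟨m, hm⟩ + y', ?_, ?_⟩
      · -- membership
        rw [hset, Set.image_insert_eq, Submodule.span_insert]
        apply Submodule.mem_sup.mpr
        exact ⟨a • v ⟨m, hm⟩, Submodule.mem_span_singleton.mpr ⟨a, rfl⟩, y', hy'mem, rfl⟩
      · -- the norm bound
        have p4 : |a| * ε ≤ A * ‖x‖ * ε := mul_le_mul_of_nonneg_right ha_bound hε0.le
        have p5 : Km * ε * (‖x‖ + |a| * (τ⁻¹ + 1))
            ≤ Km * ε * (‖x‖ + A * ‖x‖ * (τ⁻¹ + 1)) := by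
          apply mul_le_mul_of_nonneg_left _ (mul_nonneg hKm0 hε0.le)
          have h5 : |a| * (τ⁻¹ + 1) ≤ A * ‖x‖ * (τ⁻¹ + 1) :=
            mul_le_mul_of_nonneg_right ha_bound (by positivity)
          linarith
        have heq : A * ‖x‖ * ε + Km * ε * (‖x‖ + A * ‖x‖ * (τ⁻¹ + 1))
            = ε * ‖x‖ * (A + Km * (L - 1)) := by rw [hL]; ring
        have step : ‖x - (a • v ⟨m, hm⟩ + y')‖ ≤ ε * ‖x‖ * (A + Km * (L - 1)) := by
          linarith only [herr, e1, p4, p5, heq]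
        have hrec : A + Km * (L - 1) ≤ A * L ^ (m + 1) := by
          have hp1 : (1 : ℝ) ≤ L ^ m := one_le_pow₀ hL1
          have h6 : 0 ≤ A * (L ^ m - 1) := mul_nonneg hA0.le (by linarith)
          rw [pow_succ, hKm]
          linarith only [h6]
        calc ‖x - (a • v ⟨m, hm⟩ + y')‖ ≤ ε * ‖x‖ * (A + Km * (L - 1)) := step
          _ ≤ ε * ‖x‖ * (A * L ^ (m + 1)) :=
              mul_le_mul_of_nonneg_left hrec (mul_nonneg hε0.le (norm_nonneg x))
          _ = A * L ^ (m + 1) * ε * ‖x‖ := by ring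
    · -- degenerate case : m ≥ k
      have hset : {j : Fin k | (j : ℕ) < m + 1} = {j : Fin k | (j : ℕ) < m} := by
        ext j; have := j.isLt; simp only [Set.mem_setOf_eq]; omega
      rw [hset] at hx ⊢
      obtain ⟨x', hx'mem, hx'⟩ := IH x hx
      refine ⟨x', hx'mem, le_trans hx' ?_⟩
      have h1 : L ^ m ≤ L ^ (m + 1) := pow_le_pow_right₀ hL1 (Nat.le_succ m)
      have h2 : A * L ^ m ≤ A * L ^ (m + 1) := mul_le_mul_of_nonneg_left h1 hA0.le
      have h3 : 0 ≤ ε * ‖x‖ := mul_nonneg hε0.le (norm_nonneg x)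
      linarith only [mul_nonneg (sub_nonneg.mpr h2) h3]

set_option maxHeartbeats 1000000 in
/-- Stability of general position: if `v` is in `τ`-general position and
`‖w i − v i‖ < ε` for all `i`, then `w` is in `(τ − c(k,τ)·ε)`-general position. -/
theorem gen_pos_stable (k : ℕ) (τ : ℝ) (hτ0 : 0 < τ) (hτ1 : τ < 1) :
    ∃ c : ℝ, 0 < c ∧
      ∀ (X : Type) [NormedAddCommGroup X] [NormedSpace ℝ X] [CompleteSpace X]
        (v w : Fin k → X) (ε : ℝ), 0 < ε →
          InGenPos τ v → (∀ i, ‖w i - v i‖ < ε) → 0 < τ - c * ε →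
          InGenPos (τ - c * ε) w := by
  have hτi0 : 0 < τ⁻¹ := inv_pos.mpr hτ0
  have hττ : τ * τ⁻¹ = 1 := mul_inv_cancel₀ hτ0.ne'
  have hτi1 : 1 ≤ τ⁻¹ := by nlinarith [mul_pos (by linarith : (0:ℝ) < 1 - τ) hτi0]
  obtain ⟨A, hA⟩ : ∃ t : ℝ, t = 4 / τ := ⟨_, rfl⟩
  obtain ⟨L, hL⟩ : ∃ t : ℝ, t = 2 + A * (τ⁻¹ + 1) := ⟨_, rfl⟩
  obtain ⟨K, hK⟩ : ∃ t : ℝ, t = A * L ^ k := ⟨_, rfl⟩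
  have hA0 : 0 < A := by rw [hA]; positivity
  have hL1 : 1 ≤ L := by
    rw [hL]
    have : 0 ≤ A * (τ⁻¹ + 1) := by positivity
    linarith
  have hL0 : 0 < L := lt_of_lt_of_le one_pos hL1
  have hK0 : 0 < K := by
    rw [hK]
    have : (0:ℝ) < L ^ k := pow_pos hL0 k
    positivity
  have hKτ : 0 ≤ K * (τ⁻¹ + 1) := by positivity
  have hKτ2 : 0 ≤ K * τ⁻¹ := by positivity
  obtain ⟨c, hc⟩ : ∃ t : ℝ, t = 5 + 4 * K * (τ⁻¹ + 1) + 2 * K * τ⁻¹ := ⟨_, rfl⟩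
  have hc5 : 5 ≤ c := by rw [hc]; linarith only [hKτ, hKτ2]
  have hc0 : 0 < c := by linarith
  refine ⟨c, hc0, ?_⟩
  intro X _ _ _ v w ε hε0 hv hw hpos
  have hcε : c * ε < τ := by linarith
  have hc1 : 1 ≤ c := by linarith
  have h5ε : 5 * ε ≤ c * ε := mul_le_mul_of_nonneg_right hc5 hε0.le
  have hε1 : ε ≤ τ / 4 := by linarith
  have hεK : ε * (A * L ^ k) * (τ⁻¹ + 1) ≤ τ / 4 := by
    have h1 : 4 * K * (τ⁻¹ + 1) ≤ c := by rw [hc]; linarith only [hKτ2]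
    have h2 : (4 * K * (τ⁻¹ + 1)) * ε ≤ c * ε := mul_le_mul_of_nonneg_right h1 hε0.le
    rw [← hK]
    linarith only [h2, hcε]
  constructor
  · intro i
    have hwv := hw i
    have hv1 := (hv.1 i).1
    have hv2 := (hv.1 i).2
    have htri1 : ‖v i‖ - ‖w i‖ ≤ ‖w i - v i‖ := by
      have h := (abs_le.mp (abs_norm_sub_norm_le (v i) (w i))).2
      rwa [norm_sub_rev] at h
    have htri2 : ‖w i‖ - ‖v i‖ ≤ ‖w i - v i‖ :=
      (abs_le.mp (abs_norm_sub_norm_le (w i) (v i))).2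
    have hεc : ε ≤ c * ε := by linarith only [h5ε, hε0]
    constructor
    · linarith only [hv1, htri1, hwv, hεc]
    · have hub : ‖w i‖ ≤ τ⁻¹ + ε := by linarith only [htri2, hwv, hv2]
      have hmul : (τ⁻¹ + ε) * (τ - c * ε) ≤ 1 := by
        have f1 : 0 ≤ ε * ((c - 1) * τ⁻¹) :=
          mul_nonneg hε0.le (mul_nonneg (by linarith) hτi0.le)
        have f2 : 0 ≤ ε * (τ⁻¹ - τ) := mul_nonneg hε0.le (by linarith)
        have f3 : 0 ≤ c * ε * ε := mul_nonneg (mul_nonneg hc0.le hε0.le) hε0.le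
        nlinarith [f1, f2, f3, hττ]
      have h2 : τ⁻¹ + ε ≤ 1 / (τ - c * ε) := (le_div_iff₀ hpos).mpr hmul
      rw [one_div] at h2
      linarith only [hub, h2]
  · intro i
    apply le_infDist_aux ⟨0, by exact Submodule.zero_mem _⟩
    intro x hx
    have hseteq : {j : Fin k | j < i} = {j : Fin k | (j : ℕ) < (i : ℕ)} := by
      ext j; exact Fin.lt_def
    rw [hseteq] at hx
    obtain ⟨x', hx'mem, hx'⟩ := approx_span hτ0 hτ1 hε0 hv hw hA hL hε1 hεK (i : ℕ) x hx
    have hwv := hw i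
    have hv2 := (hv.1 i).2
    have hKi : A * L ^ (i : ℕ) ≤ K := by
      rw [hK]
      exact mul_le_mul_of_nonneg_left (pow_le_pow_right₀ hL1 i.isLt.le) hA0.le
    have hKi0 : 0 ≤ A * L ^ (i : ℕ) := by positivity
    rcases le_or_gt ‖x‖ (2 * τ⁻¹) with hcase | hcase
    · -- small x
      have hinf := hv.2 i
      rw [hseteq] at hinf
      have hd : τ ≤ dist (v i) x' := le_trans hinf (Metric.infDist_le_dist_of_mem hx'mem)
      have t0 : dist (v i) x' ≤ dist (v i) (w i) + dist (w i) x + dist x x' := by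
        linarith only [dist_triangle (v i) (w i) x', dist_triangle (w i) x x']
      have td1 : dist (v i) (w i) ≤ ε := by
        rw [dist_eq_norm, norm_sub_rev]; exact hwv.le
      have td2 : dist x x' = ‖x - x'‖ := dist_eq_norm x x'
      have b1 : A * L ^ (i : ℕ) * ε * ‖x‖ ≤ A * L ^ (i : ℕ) * ε * (2 * τ⁻¹) :=
        mul_le_mul_of_nonneg_left hcase (by positivity)
      have b2 : A * L ^ (i : ℕ) * ε * (2 * τ⁻¹) ≤ K * ε * (2 * τ⁻¹) :=
        mul_le_mul_of_nonneg_right (mul_le_mul_of_nonneg_right hKi hε0.le) (by positivity)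
      have hcε2 : ε + 2 * K * τ⁻¹ * ε ≤ c * ε := by
        have h1 : 1 + 2 * K * τ⁻¹ ≤ c := by rw [hc]; linarith only [hKτ]
        have h2 := mul_le_mul_of_nonneg_right h1 hε0.le
        linarith only [h2]
      linarith only [hd, t0, td1, td2, hx', b1, b2, hcε2]
    · -- big x
      have hwn : ‖w i‖ ≤ τ⁻¹ + ε := by
        have h := (abs_le.mp (abs_norm_sub_norm_le (w i) (v i))).2
        linarith only [h, hwv, hv2]
      have hd : ‖x‖ - ‖w i‖ ≤ dist (w i) x := by
        rw [dist_eq_norm]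
        linarith only [(abs_le.mp (abs_norm_sub_norm_le (w i) x)).1]
      have hεc : ε ≤ c * ε := by linarith only [h5ε, hε0]
      linarith only [hd, hwn, hcase, hεc, hτ1, hτi1]
end

section
/- Let p + V and q + W be k-dimensional affine subspaces of a Banach space X with (p + V) ∩ B_{1/2}(0) ≠ ∅. If (p + V) ∩ B_1(0) ⊂ B_δ(q + W), then the Hausdorff distance satisfies d_H((p + V) ∩ B_1(0), (q + W) ∩ B_1(0)) ≤ c(k) δ, and in particular the Grassmannian distance satisfies d_G(V, W) ≤ c(k) δ. -/
/-!
Pick `x₀ ∈ p + V` with `‖x₀‖ < 1/2` and `y₀ ∈ q + W` that is `δ`-close to it. Comparing `x₀ + u`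
with `x₀` for `u ∈ V` of norm `1/2` shows that every `v ∈ V` is `4δ‖v‖`-close to `W`. Sending an
Auerbach basis of `V` to nearby vectors of `W` gives a linear map `V → W` that moves every `v` by at
most `4kδ‖v‖`; for small `δ` it is injective, hence onto because `dim V = dim W`, so conversely
every `w ∈ W` is `8kδ‖w‖`-close to `V`. Both planes (and both subspaces) are therefore `O(kδ)`-close
to each other in the unit ball, up to points slightly outside the ball, which are pulled back inside
along segments towards `x₀`, `y₀` (resp. `0`). For large `δ` the bound is trivial: all the sets
lie in the unit ball.
-/

open Metric Module

section Auerbach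

variable {E : Type*} [NormedAddCommGroup E] [NormedSpace ℝ E] [FiniteDimensional ℝ E]
  {ι : Type*} [Fintype ι] [DecidableEq ι]

theorem Module.Basis.continuous_det (b : Basis ι ℝ E) : Continuous fun v : ι → E => b.det v := by
  simp only [Basis.det_apply]
  exact (continuous_matrix fun i j =>
    (b.coord i).continuous_of_finiteDimensional.comp (continuous_apply j)).matrix_det

theorem Module.Basis.exists_isMaxOn_abs_det (b : Basis ι ℝ E) :
    ∃ e₀ ∈ Set.univ.pi fun _ : ι => closedBall (0 : E) 1, b.det e₀ ≠ 0 ∧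
      IsMaxOn (fun v => |b.det v|) (Set.univ.pi fun _ : ι => closedBall (0 : E) 1) e₀ := by
  let g : ι → E := fun i => ‖b i‖⁻¹ • b i
  have hg : g ∈ Set.univ.pi fun _ : ι => closedBall (0 : E) 1 := fun i _ => by
    rw [mem_closedBall_zero_iff, _root_.norm_smul, norm_inv, norm_norm,
      inv_mul_cancel₀ (norm_ne_zero_iff.2 (b.ne_zero i))]
  have hdet_g : b.det g ≠ 0 := by
    rw [show b.det g = (∏ i, ‖b i‖⁻¹) • b.det b from b.det.map_smul_univ _ _,
      b.det_self, smul_eq_mul, mul_one]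
    simp [Finset.prod_ne_zero_iff, b.ne_zero]
  obtain ⟨e₀, he₀, hmax⟩ :=
    (isCompact_univ_pi fun _ => isCompact_closedBall (0 : E) 1).exists_isMaxOn ⟨g, hg⟩
      (continuous_abs.comp b.continuous_det).continuousOn
  refine ⟨e₀, he₀, fun h => hdet_g ?_, hmax⟩
  simpa [h] using hmax hg

theorem Module.Basis.exists_auerbach (b : Basis ι ℝ E) :
    ∃ e : Basis ι ℝ E, (∀ i, ‖e i‖ ≤ 1) ∧ ∀ v i, |e.repr v i| ≤ ‖v‖ := by
  obtain ⟨e₀, he₀, hdet, hmax⟩ := b.exists_isMaxOn_abs_det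
  obtain ⟨hli, hsp⟩ := b.is_basis_iff_det.2 (isUnit_iff_ne_zero.2 hdet)
  refine ⟨Basis.mk hli hsp.ge, fun i => by simpa using he₀ i trivial, fun v i => ?_⟩
  -- Cramer's rule: `det e₀ * (e.repr v i) = det (update e₀ i v)`, and the right side is a
  -- linear function of `v` bounded by `|det e₀|` on the unit ball.
  have hcramer := congrArg (· v) (b.det_smul_mk_coord_eq_det_update hli hsp.ge i)
  have hbound := LinearMap.bound_of_ball_bound' one_pos |b.det e₀|
    (b.det.toMultilinearMap.toLinearMap e₀ i) (fun z hz => ?_) v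
  · simp only [LinearMap.smul_apply, Basis.coord_apply, smul_eq_mul] at hcramer
    rw [← hcramer, Real.norm_eq_abs, abs_mul, div_one] at hbound
    exact le_of_mul_le_mul_left hbound (abs_pos.2 hdet)
  · refine hmax (fun j _ => ?_)
    rcases eq_or_ne j i with rfl | hj
    · simpa using hz
    · simpa [hj] using he₀ j trivial

end Auerbach

namespace Submodule

variable {X : Type*} [NormedAddCommGroup X] [NormedSpace ℝ X]

def IsApproxBy (V W : Submodule ℝ X) (ε : ℝ) : Prop :=
  ∀ v ∈ V, ∃ w ∈ W, ‖v - w‖ ≤ ε * ‖v‖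

variable {V W : Submodule ℝ X} {ε : ℝ}

theorem isApproxBy_of_forall_norm_eq {ρ η : ℝ} (hρ : 0 < ρ)
    (h : ∀ u ∈ V, ‖u‖ = ρ → ∃ w ∈ W, ‖u - w‖ ≤ η) : V.IsApproxBy W (η / ρ) := by
  intro v hv
  rcases eq_or_ne v 0 with rfl | hv0
  · exact ⟨0, W.zero_mem, by simp⟩
  have hvn : 0 < ‖v‖ := norm_pos_iff.2 hv0
  obtain ⟨w, hw, hvw⟩ := h ((ρ / ‖v‖) • v) (V.smul_mem _ hv) (by
    rw [_root_.norm_smul, Real.norm_of_nonneg (by positivity), div_mul_cancel₀ _ hvn.ne'])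
  refine ⟨(‖v‖ / ρ) • w, W.smul_mem _ hw, ?_⟩
  have hscale : v - (‖v‖ / ρ) • w = (‖v‖ / ρ) • ((ρ / ‖v‖) • v - w) := by
    rw [smul_sub, smul_smul, div_mul_div_comm, mul_comm ‖v‖, div_self (by positivity), one_smul]
  rw [hscale, _root_.norm_smul, Real.norm_of_nonneg (by positivity)]
  calc ‖v‖ / ρ * ‖(ρ / ‖v‖) • v - w‖ ≤ ‖v‖ / ρ * η := by gcongr
    _ = η / ρ * ‖v‖ := by ring

theorem IsApproxBy.exists_linearMap [FiniteDimensional ℝ V] (h : V.IsApproxBy W ε) (hε : 0 ≤ ε) :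
    ∃ S : V →ₗ[ℝ] W, ∀ v : V, ‖(v : X) - S v‖ ≤ finrank ℝ V * ε * ‖v‖ := by
  obtain ⟨e, he, hrepr⟩ := (Module.finBasis ℝ V).exists_auerbach
  have hnear : ∀ i, ∃ w : W, ‖(e i : X) - w‖ ≤ ε := fun i => by
    obtain ⟨w, hw, hew⟩ := h (e i) (e i).2
    exact ⟨⟨w, hw⟩, hew.trans (mul_le_of_le_one_right hε (he i))⟩
  choose w hw using hnear
  refine ⟨e.constr ℝ w, fun v => ?_⟩
  have hdiff : (v : X) - e.constr ℝ w v = ∑ i, e.repr v i • ((e i : X) - w i) := by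
    have hv : (v : X) = ∑ i, e.repr v i • (e i : X) := by
      conv_lhs => rw [← e.sum_repr v]
      push_cast; rfl
    rw [Basis.constr_apply_fintype, hv]
    simp [smul_sub, Finset.sum_sub_distrib]
  calc ‖(v : X) - e.constr ℝ w v‖ ≤ ∑ i, ‖e.repr v i • ((e i : X) - w i)‖ := by
        rw [hdiff]; exact norm_sum_le _ _
    _ ≤ ∑ _i : Fin (finrank ℝ V), ‖v‖ * ε := by
        gcongr with i
        rw [_root_.norm_smul, Real.norm_eq_abs]
        exact mul_le_mul (hrepr v i) (hw i) (norm_nonneg _) (norm_nonneg _)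
    _ = finrank ℝ V * ε * ‖v‖ := by
        rw [Finset.sum_const, Finset.card_univ, Fintype.card_fin, nsmul_eq_mul]; ring

theorem IsApproxBy.symm [FiniteDimensional ℝ V] [FiniteDimensional ℝ W] (h : V.IsApproxBy W ε)
    (hε : 0 ≤ ε) (hVW : finrank ℝ V = finrank ℝ W) (hsmall : finrank ℝ V * ε ≤ 1 / 2) :
    W.IsApproxBy V (2 * finrank ℝ V * ε) := by
  obtain ⟨S, hS⟩ := h.exists_linearMap hε
  have hhalf : ∀ v : V, ‖(v : X)‖ ≤ 2 * ‖(S v : X)‖ := fun v => by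
    have := (hS v).trans (mul_le_mul_of_nonneg_right hsmall (norm_nonneg _))
    have := norm_le_norm_sub_add (v : X) (S v)
    rw [Submodule.coe_norm] at *
    linarith
  have hinj : Function.Injective S := by
    refine (injective_iff_map_eq_zero S).2 fun v hv => ?_
    have := hhalf v
    rw [hv, ZeroMemClass.coe_zero, norm_zero, mul_zero] at this
    exact Subtype.ext (norm_le_zero_iff.1 this)
  have hsurj := (LinearMap.injective_iff_surjective_of_finrank_eq_finrank hVW).1 hinj
  intro w hw
  obtain ⟨v, hv⟩ := hsurj ⟨w, hw⟩
  refine ⟨v, v.2, ?_⟩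
  have hw' : w = S v := by rw [hv]
  calc ‖w - v‖ = ‖(v : X) - S v‖ := by rw [hw', norm_sub_rev]
    _ ≤ finrank ℝ V * ε * (2 * ‖w‖) := by
      refine (hS v).trans (mul_le_mul_of_nonneg_left ?_ (by positivity))
      rw [Submodule.coe_norm, hw']
      exact hhalf v
    _ = 2 * finrank ℝ V * ε * ‖w‖ := by ring

theorem IsApproxBy.mono {ε' : ℝ} (h : V.IsApproxBy W ε) (hεε' : ε ≤ ε') : V.IsApproxBy W ε' :=
  fun v hv => (h v hv).imp fun _ ⟨hw, hvw⟩ => ⟨hw, hvw.trans (by gcongr)⟩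

theorem IsApproxBy.exists_mem_dist_le_of_mem_ball (h : V.IsApproxBy W ε) (hε : 0 ≤ ε) {v : X}
    (hv : v ∈ (V : Set X) ∩ ball 0 1) : ∃ w ∈ W, dist v w ≤ ε := by
  obtain ⟨w, hw, hvw⟩ := h v hv.1
  refine ⟨w, hw, ?_⟩
  rw [dist_eq_norm]
  exact hvw.trans (mul_le_of_le_one_right hε (mem_ball_zero_iff.1 hv.2).le)

variable {p q : X}

theorem sub_mem_of_mem_image_add_left {x y : X} (hx : x ∈ (p + ·) '' (V : Set X))
    (hy : y ∈ (p + ·) '' (V : Set X)) : x - y ∈ V := by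
  obtain ⟨v, hv, rfl⟩ := hx
  obtain ⟨v', hv', rfl⟩ := hy
  simpa using V.sub_mem hv hv'

theorem add_mem_image_add_left {x v : X} (hx : x ∈ (p + ·) '' (V : Set X)) (hv : v ∈ V) :
    x + v ∈ (p + ·) '' (V : Set X) := by
  obtain ⟨u, hu, rfl⟩ := hx
  exact ⟨u + v, V.add_mem hu hv, (add_assoc _ _ _).symm⟩

theorem isApproxBy_of_subset_thickening {x₀ : X} {δ : ℝ} (hx₀ : x₀ ∈ (p + ·) '' (V : Set X))
    (hx₀n : ‖x₀‖ < 1 / 2)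
    (h : (p + ·) '' (V : Set X) ∩ ball 0 1 ⊆ thickening δ ((q + ·) '' (W : Set X))) :
    V.IsApproxBy W (4 * δ) := by
  have hnear : ∀ u ∈ V, ‖x₀ + u‖ < 1 → ∃ y ∈ (q + ·) '' (W : Set X), dist (x₀ + u) y < δ :=
    fun u hu hun =>
      mem_thickening_iff.1 (h ⟨add_mem_image_add_left hx₀ hu, mem_ball_zero_iff.2 hun⟩)
  obtain ⟨y₀, hy₀, hxy₀⟩ := hnear 0 V.zero_mem (by simpa using hx₀n.trans one_half_lt_one)
  convert isApproxBy_of_forall_norm_eq (V := V) (W := W) (η := 2 * δ) one_half_pos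
    (fun u hu hun => ?_) using 1
  · ring
  obtain ⟨y, hy, hxy⟩ := hnear u hu (by linarith [norm_add_le x₀ u])
  refine ⟨y - y₀, sub_mem_of_mem_image_add_left hy hy₀, ?_⟩
  calc ‖u - (y - y₀)‖ = ‖(x₀ + u - y) - (x₀ + 0 - y₀)‖ := by congr 1; abel
    _ ≤ dist (x₀ + u) y + dist (x₀ + 0) y₀ := by
      rw [dist_eq_norm, dist_eq_norm]; exact norm_sub_le _ _
    _ ≤ 2 * δ := by linarith

theorem IsApproxBy.exists_mem_image_add_left_dist_le (h : W.IsApproxBy V ε) {x₀ y₀ y : X}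
    (hx₀ : x₀ ∈ (p + ·) '' (V : Set X)) (hy₀ : y₀ ∈ (q + ·) '' (W : Set X))
    (hy : y ∈ (q + ·) '' (W : Set X)) :
    ∃ x ∈ (p + ·) '' (V : Set X), dist y x ≤ ε * ‖y - y₀‖ + dist y₀ x₀ := by
  obtain ⟨v, hv, hyv⟩ := h _ (sub_mem_of_mem_image_add_left hy hy₀)
  refine ⟨x₀ + v, add_mem_image_add_left hx₀ hv, ?_⟩
  calc dist y (x₀ + v) = ‖(y - y₀ - v) + (y₀ - x₀)‖ := by rw [dist_eq_norm]; congr 1; abel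
    _ ≤ ε * ‖y - y₀‖ + dist y₀ x₀ := by
      rw [dist_eq_norm]; exact (norm_add_le _ _).trans (by linarith)

end Submodule

theorem hausdorffDist_le_of_subset_ball {α : Type*} [PseudoMetricSpace α] {s t : Set α} {c : α}
    {R : ℝ} (hR : 0 ≤ R) (hs : s ⊆ ball c R) (ht : t ⊆ ball c R) : hausdorffDist s t ≤ 2 * R := by
  rcases s.eq_empty_or_nonempty with rfl | hs₀
  · simpa using hR
  rcases t.eq_empty_or_nonempty with rfl | ht₀
  · simpa using hR
  calc hausdorffDist s t ≤ diam (s ∪ t) :=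
        hausdorffDist_le_diam hs₀ (isBounded_ball.subset hs) ht₀ (isBounded_ball.subset ht)
    _ ≤ diam (ball c R) := diam_mono (Set.union_subset hs ht) isBounded_ball
    _ ≤ 2 * R := diam_ball hR

section Geometry

variable {X : Type*} [NormedAddCommGroup X] [NormedSpace ℝ X]

theorem Convex.exists_mem_inter_ball_norm_sub_le {T : Set X} (hT : Convex ℝ T) {t₀ y : X}
    (ht₀ : t₀ ∈ T) (ht₀n : ‖t₀‖ ≤ 3 / 4) (hy : y ∈ T) {r : ℝ} (hr : 0 < r) (hr' : r ≤ 1 / 8)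
    (hyn : ‖y‖ < 1 + r) : ∃ y' ∈ T ∩ ball 0 1, ‖y - y'‖ ≤ 16 * r := by
  have ht : 8 * r ∈ Set.Icc (0 : ℝ) 1 := ⟨by positivity, by linarith⟩
  refine ⟨y + (8 * r) • (t₀ - y), ⟨hT.add_smul_sub_mem hy ht₀ ht, ?_⟩, ?_⟩
  · rw [mem_ball_zero_iff, show y + (8 * r) • (t₀ - y) = (1 - 8 * r) • y + (8 * r) • t₀ by module]
    calc ‖(1 - 8 * r) • y + (8 * r) • t₀‖ ≤ (1 - 8 * r) * ‖y‖ + 8 * r * ‖t₀‖ := by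
          refine (norm_add_le _ _).trans_eq ?_
          rw [_root_.norm_smul, _root_.norm_smul, Real.norm_of_nonneg (by linarith),
            Real.norm_of_nonneg (by positivity)]
      _ ≤ (1 - 8 * r) * (1 + r) + 8 * r * (3 / 4) := by gcongr; linarith
      _ < 1 := by nlinarith
  · calc ‖y - (y + (8 * r) • (t₀ - y))‖ = 8 * r * ‖t₀ - y‖ := by
          rw [sub_add_cancel_left, norm_neg, _root_.norm_smul, Real.norm_of_nonneg (by positivity)]
      _ ≤ 8 * r * 2 := by
          gcongr
          linarith [norm_sub_le t₀ y]
      _ = 16 * r := by ring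

theorem hausdorffDist_inter_ball_le_of_convex {S T : Set X} (hS : Convex ℝ S) (hT : Convex ℝ T)
    {s₀ t₀ : X} (hs₀ : s₀ ∈ S) (ht₀ : t₀ ∈ T) (hs₀n : ‖s₀‖ ≤ 3 / 4) (ht₀n : ‖t₀‖ ≤ 3 / 4)
    {r : ℝ} (hr : 0 < r) (hr' : r ≤ 1 / 8)
    (hST : ∀ x ∈ S ∩ ball 0 1, ∃ y ∈ T, dist x y ≤ r)
    (hTS : ∀ y ∈ T ∩ ball 0 1, ∃ x ∈ S, dist y x ≤ r) :
    hausdorffDist (S ∩ ball 0 1) (T ∩ ball 0 1) ≤ 17 * r := by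
  have key : ∀ {A B : Set X}, Convex ℝ B → ∀ {b₀}, b₀ ∈ B → ‖b₀‖ ≤ 3 / 4 →
      (∀ x ∈ A ∩ ball 0 1, ∃ y ∈ B, dist x y ≤ r) →
      ∀ x ∈ A ∩ ball 0 1, ∃ y ∈ B ∩ ball 0 1, dist x y ≤ 17 * r := by
    intro A B hB b₀ hb₀ hb₀n hAB x hx
    obtain ⟨y, hy, hxy⟩ := hAB x hx
    have hyn : ‖y‖ < 1 + r := by
      have := mem_ball_zero_iff.1 hx.2
      linarith [norm_le_norm_add_norm_sub' y x, dist_eq_norm x y, norm_sub_rev x y]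
    obtain ⟨y', hy', hyy'⟩ := hB.exists_mem_inter_ball_norm_sub_le hb₀ hb₀n hy hr hr' hyn
    refine ⟨y', hy', ?_⟩
    linarith [dist_triangle x y y', dist_eq_norm y y']
  exact hausdorffDist_le_of_mem_dist (by positivity) (key hT ht₀ ht₀n hST) (key hS hs₀ hs₀n hTS)

end Geometry

/-- If one `k`-dimensional affine plane meeting `B_{1/2}(0)` has its unit-ball part
contained in the `δ`-neighborhood of another `k`-dimensional affine plane, then the
two planes are Hausdorff-close in `B_1(0)`, and the associated linear subspaces are
close in Grassmannian distance, with a constant depending only on `k`. -/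
theorem affine_planes_hausdorff_close (k : ℕ) :
    ∃ c : ℝ, 0 < c ∧
      ∀ (X : Type) [NormedAddCommGroup X] [NormedSpace ℝ X] [CompleteSpace X]
        (V W : Submodule ℝ X), FiniteDimensional ℝ V → FiniteDimensional ℝ W →
        Module.finrank ℝ V = k → Module.finrank ℝ W = k →
        ∀ (p q : X) (δ : ℝ), 0 ≤ δ →
        (((fun w => p + w) '' (V : Set X)) ∩ ball 0 (1/2)).Nonempty →
        ((fun w => p + w) '' (V : Set X)) ∩ ball 0 1 ⊆
            Metric.thickening δ ((fun w => q + w) '' (W : Set X)) →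
        hausdorffDist (((fun w => p + w) '' (V : Set X)) ∩ ball 0 1)
            (((fun w => q + w) '' (W : Set X)) ∩ ball 0 1) ≤ c * δ ∧
        hausdorffDist ((V : Set X) ∩ ball 0 1) ((W : Set X) ∩ ball 0 1) ≤ c * δ := by
  refine ⟨272 * (k + 1), by positivity, ?_⟩
  intro X _ _ _ V W _ _ hV hW p q δ hδ ⟨x₀, hx₀, hx₀n⟩ hPQ
  rw [mem_ball_zero_iff] at hx₀n
  obtain ⟨y₀, hy₀, hxy₀⟩ :=
    mem_thickening_iff.1 (hPQ ⟨hx₀, mem_ball_zero_iff.2 (hx₀n.trans one_half_lt_one)⟩)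
  set r := 16 * (k + 1 : ℝ) * δ
  have hr : 0 < r := by have := dist_nonneg.trans_lt hxy₀; positivity
  have hkδ : 0 ≤ (k : ℝ) * δ := by positivity
  by_cases hsmall : r ≤ 1 / 8
  swap
  · have hbound : ∀ s t : Set X,
        hausdorffDist (s ∩ ball 0 1) (t ∩ ball 0 1) ≤ 272 * (k + 1) * δ := fun s t =>
      (hausdorffDist_le_of_subset_ball zero_le_one Set.inter_subset_right
        Set.inter_subset_right).trans (by linarith)
    exact ⟨hbound _ _, hbound _ _⟩
  have hVW := Submodule.isApproxBy_of_subset_thickening hx₀ hx₀n hPQ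
  have hWV := hVW.symm (by positivity) (hV.trans hW.symm) (by rw [hV]; nlinarith)
  rw [hV] at hWV
  have hy₀n : ‖y₀‖ ≤ 3 / 4 := by linarith [norm_le_norm_add_norm_sub' y₀ x₀, dist_eq_norm' x₀ y₀]
  constructor
  · refine (hausdorffDist_inter_ball_le_of_convex (V.convex.translate p) (W.convex.translate q)
      hx₀ hy₀ (by linarith) hy₀n hr hsmall (fun x hx => ?_) (fun y hy => ?_)).trans_eq (by ring)
    · obtain ⟨y, hy, hxy⟩ := mem_thickening_iff.1 (hPQ hx)
      exact ⟨y, hy, by linarith⟩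
    · obtain ⟨x, hx, hyx⟩ := hWV.exists_mem_image_add_left_dist_le hx₀ hy₀ hy.1
      have hyy₀ : ‖y - y₀‖ ≤ 2 := by linarith [norm_sub_le y y₀, mem_ball_zero_iff.1 hy.2]
      have := mul_le_mul_of_nonneg_left hyy₀ (by positivity : (0 : ℝ) ≤ 2 * k * (4 * δ))
      exact ⟨x, hx, by linarith [dist_comm y₀ x₀]⟩
  · refine (hausdorffDist_inter_ball_le_of_convex V.convex W.convex V.zero_mem W.zero_mem
      (by norm_num) (by norm_num) hr hsmall (fun v hv => ?_) (fun w hw => ?_)).trans_eq (by ring)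
    · exact (hVW.mono (by linarith)).exists_mem_dist_le_of_mem_ball hr.le hv
    · exact (hWV.mono (by linarith)).exists_mem_dist_le_of_mem_ball hr.le hw
end

section
/- Let H be a Hilbert space and V, W closed linear subspaces with orthogonal complements V^⊥, W^⊥. Then d_G(V, W) = d_G(V^⊥, W^⊥), where d_G is the Grassmannian (Hausdorff) distance between unit balls of the subspaces. -/
/-!
For `v` in the unit ball of `V`, the distance from `v` to the unit ball of `W` is at most
`‖P_{Wᗮ} v‖`, witnessed by `P_W v`. That norm is `⟪e, v⟫` for a unit vector `e ∈ Wᗮ`, and since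
`v ⊥ Vᗮ` and `‖v‖ ≤ 1`, `⟪e, v⟫ = ⟪e - z, v⟫ ≤ ‖e - z‖` for every `z ∈ Vᗮ`; so it is at most the
distance from `e` to the unit ball of `Vᗮ`. Hence `d_G(V, W) ≤ d_G(Vᗮ, Wᗮ)`, and applying this
to the complements, with `Vᗮᗮ = V`, gives equality.
-/

open Metric
open scoped RealInnerProductSpace

namespace Submodule

variable {H : Type*} [NormedAddCommGroup H] [InnerProductSpace ℝ H]

def unitBall (K : Submodule ℝ H) : Set H := (K : Set H) ∩ closedBall 0 1

theorem zero_mem_unitBall (K : Submodule ℝ H) : (0 : H) ∈ K.unitBall :=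
  ⟨K.zero_mem, mem_closedBall_self zero_le_one⟩

theorem hausdorffEDist_unitBall_ne_top (K L : Submodule ℝ H) :
    hausdorffEDist K.unitBall L.unitBall ≠ ⊤ :=
  hausdorffEDist_ne_top_of_nonempty_of_bounded ⟨0, K.zero_mem_unitBall⟩ ⟨0, L.zero_mem_unitBall⟩
    (isBounded_closedBall.subset Set.inter_subset_right)
    (isBounded_closedBall.subset Set.inter_subset_right)

theorem inner_le_infDist_unitBall_orthogonal {K : Submodule ℝ H} {v : H} (hv : v ∈ K.unitBall)
    (x : H) : ⟪x, v⟫ ≤ infDist x Kᗮ.unitBall := by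
  refine (le_infDist ⟨0, Kᗮ.zero_mem_unitBall⟩).2 fun z hz => ?_
  have hzv : ⟪z, v⟫ = 0 := K.inner_left_of_mem_orthogonal hv.1 hz.1
  calc ⟪x, v⟫ = ⟪x - z, v⟫ := by rw [inner_sub_left, hzv, sub_zero]
    _ ≤ ‖x - z‖ * ‖v‖ := real_inner_le_norm _ _
    _ ≤ ‖x - z‖ := mul_le_of_le_one_right (norm_nonneg _) (mem_closedBall_zero_iff.1 hv.2)
    _ = dist x z := (dist_eq_norm x z).symm

theorem exists_mem_unitBall_inner_eq_norm_starProjection (K : Submodule ℝ H)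
    [K.HasOrthogonalProjection] (v : H) :
    ∃ e ∈ K.unitBall, ⟪e, v⟫ = ‖K.starProjection v‖ := by
  set u := K.starProjection v
  rcases eq_or_ne u 0 with hu | hu
  · exact ⟨0, K.zero_mem_unitBall, by simp [hu]⟩
  have hu' : ‖u‖ ≠ 0 := norm_ne_zero_iff.2 hu
  refine ⟨‖u‖⁻¹ • u, ⟨K.smul_mem _ (K.starProjection_apply_mem v), ?_⟩, ?_⟩
  · rw [mem_closedBall_zero_iff, norm_smul, norm_inv, norm_norm, inv_mul_cancel₀ hu']
  · have huv : ⟪u, v⟫ = ‖u‖ ^ 2 := by simpa using K.re_inner_starProjection_eq_normSq v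
    rw [real_inner_smul_left, huv, sq, inv_mul_cancel_left₀ hu']

theorem infDist_unitBall_le_hausdorffDist_orthogonal (K L : Submodule ℝ H)
    [L.HasOrthogonalProjection] {v : H} (hv : v ∈ K.unitBall) :
    infDist v L.unitBall ≤ hausdorffDist Kᗮ.unitBall Lᗮ.unitBall := by
  obtain ⟨e, he, hev⟩ := Lᗮ.exists_mem_unitBall_inner_eq_norm_starProjection v
  have hproj : L.starProjection v ∈ L.unitBall :=
    ⟨L.starProjection_apply_mem v, mem_closedBall_zero_iff.2
      ((L.norm_starProjection_apply_le v).trans (mem_closedBall_zero_iff.1 hv.2))⟩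
  calc infDist v L.unitBall ≤ dist v (L.starProjection v) := infDist_le_dist_of_mem hproj
    _ = ⟪e, v⟫ := by rw [hev, dist_eq_norm, starProjection_orthogonal_val]
    _ ≤ infDist e Kᗮ.unitBall := inner_le_infDist_unitBall_orthogonal hv e
    _ ≤ hausdorffDist Lᗮ.unitBall Kᗮ.unitBall :=
      infDist_le_hausdorffDist_of_mem he (hausdorffEDist_unitBall_ne_top _ _)
    _ = hausdorffDist Kᗮ.unitBall Lᗮ.unitBall := hausdorffDist_comm

theorem hausdorffDist_unitBall_le_orthogonal (K L : Submodule ℝ H) [K.HasOrthogonalProjection]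
    [L.HasOrthogonalProjection] :
    hausdorffDist K.unitBall L.unitBall ≤ hausdorffDist Kᗮ.unitBall Lᗮ.unitBall := by
  refine hausdorffDist_le_of_infDist hausdorffDist_nonneg
    (fun v hv => K.infDist_unitBall_le_hausdorffDist_orthogonal L hv) fun w hw => ?_
  rw [hausdorffDist_comm]
  exact L.infDist_unitBall_le_hausdorffDist_orthogonal K hw

theorem hausdorffDist_unitBall_orthogonal (K L : Submodule ℝ H) [K.HasOrthogonalProjection]
    [L.HasOrthogonalProjection] :
    hausdorffDist Kᗮ.unitBall Lᗮ.unitBall = hausdorffDist K.unitBall L.unitBall := by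
  refine le_antisymm ?_ (K.hausdorffDist_unitBall_le_orthogonal L)
  simpa only [orthogonal_orthogonal] using Kᗮ.hausdorffDist_unitBall_le_orthogonal Lᗮ

end Submodule

/-- In a Hilbert space, the Grassmannian distance between two closed subspaces
equals the Grassmannian distance between their orthogonal complements. -/
theorem grassDist_orthogonal_complements {H : Type} [NormedAddCommGroup H]
    [InnerProductSpace ℝ H] [CompleteSpace H]
    (V W : Submodule ℝ H) (hV : IsClosed (V : Set H)) (hW : IsClosed (W : Set H)) :
    hausdorffDist ((V : Set H) ∩ closedBall 0 1) ((W : Set H) ∩ closedBall 0 1) =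
      hausdorffDist ((Vᗮ : Set H) ∩ closedBall 0 1)
        ((Wᗮ : Set H) ∩ closedBall 0 1) := by
  have : CompleteSpace V := hV.completeSpace_coe
  have : CompleteSpace W := hW.completeSpace_coe
  exact (V.hausdorffDist_unitBall_orthogonal W).symm
end

section
/- Let V, W be closed linear subspaces of a Hilbert space H with orthogonal projections π_V, π_W. Then for every x ∈ H, ‖π_V(x) − π_W(x)‖ ≤ d_G(V,W) ‖x‖; conversely d_G(V,W) ≤ sup_{‖x‖=1} ‖π_V(x) − π_W(x)‖. -/
/-!
Both sides are the operator norm `‖π_V - π_W‖`.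

For `v` in the unit ball of `V`, the nearest point of `W` to `v` is `π_W v`, so
`‖v - π_W v‖ ≤ d_G(V, W)`; conversely `π_W v` lies in the unit ball of `W` at distance
`‖(π_V - π_W) v‖` from `v`, which gives `d_G(V, W) ≤ ‖π_V - π_W‖`.

For the other inequality, split `x = a + b` with `a ∈ V`, `b ∈ Vᗮ`. Then
`(π_V - π_W) x = (a - π_W a) - π_W b` is an orthogonal sum, and with `q = π_W b` the identity
`‖q‖² = ⟪q - π_V q, b⟫ ≤ d_G(W, V) ‖q‖ ‖b‖` bounds the second term, so Pythagoras gives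
`‖(π_V - π_W) x‖ ≤ d_G(V, W) ‖x‖`.
-/

open Metric

namespace Submodule

variable {H : Type*} [NormedAddCommGroup H] [InnerProductSpace ℝ H]

noncomputable def grassDist (V W : Submodule ℝ H) : ℝ :=
  hausdorffDist ((V : Set H) ∩ closedBall 0 1) ((W : Set H) ∩ closedBall 0 1)

lemma grassDist_comm (V W : Submodule ℝ H) : grassDist V W = grassDist W V :=
  hausdorffDist_comm

lemma grassDist_nonneg (V W : Submodule ℝ H) : 0 ≤ grassDist V W :=
  hausdorffDist_nonneg

lemma infDist_le_grassDist {V : Submodule ℝ H} (W : Submodule ℝ H) {v : H} (hv : v ∈ V)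
    (hv₁ : ‖v‖ ≤ 1) : infDist v ((W : Set H) ∩ closedBall 0 1) ≤ grassDist V W := by
  have hne (U : Submodule ℝ H) : ((U : Set H) ∩ closedBall 0 1).Nonempty :=
    ⟨0, U.zero_mem, by simp⟩
  have hbdd (U : Submodule ℝ H) : Bornology.IsBounded ((U : Set H) ∩ closedBall 0 1) :=
    isBounded_closedBall.subset Set.inter_subset_right
  exact infDist_le_hausdorffDist_of_mem ⟨hv, by simpa using hv₁⟩
    (hausdorffEDist_ne_top_of_nonempty_of_bounded (hne V) (hne W) (hbdd V) (hbdd W))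

lemma norm_sub_starProjection_le_infDist (K : Submodule ℝ H) [K.HasOrthogonalProjection]
    (x : H) {s : Set H} (hs : s.Nonempty) (hsK : s ⊆ K) :
    ‖x - K.starProjection x‖ ≤ infDist x s :=
  (le_infDist hs).2 fun w hw => by
    rw [dist_eq_norm, starProjection_minimal]
    exact ciInf_le ⟨0, by rintro _ ⟨y, rfl⟩; positivity⟩ (⟨w, hsK hw⟩ : K)

lemma norm_sub_starProjection_le_grassDist_mul {V : Submodule ℝ H} (W : Submodule ℝ H)
    [W.HasOrthogonalProjection] {v : H} (hv : v ∈ V) :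
    ‖v - W.starProjection v‖ ≤ grassDist V W * ‖v‖ := by
  let T : V →L[ℝ] H := (ContinuousLinearMap.id ℝ H - W.starProjection) ∘L V.subtypeL
  have hT : ‖T‖ ≤ grassDist V W :=
    ContinuousLinearMap.opNorm_le_of_unit_norm (grassDist_nonneg V W) fun u hu =>
      (norm_sub_starProjection_le_infDist W u (s := (W : Set H) ∩ closedBall 0 1)
        ⟨0, W.zero_mem, by simp⟩ Set.inter_subset_left).trans (infDist_le_grassDist W u.2 hu.le)
  calc ‖v - W.starProjection v‖ = ‖T ⟨v, hv⟩‖ := rfl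
    _ ≤ ‖T‖ * ‖v‖ := T.le_opNorm ⟨v, hv⟩
    _ ≤ grassDist V W * ‖v‖ := by gcongr

lemma norm_starProjection_le_grassDist_mul_of_mem_orthogonal (V W : Submodule ℝ H)
    [V.HasOrthogonalProjection] [W.HasOrthogonalProjection] {y : H} (hy : y ∈ Vᗮ) :
    ‖W.starProjection y‖ ≤ grassDist V W * ‖y‖ := by
  set q := W.starProjection y
  have hq : ‖q‖ ^ 2 ≤ grassDist V W * ‖q‖ * ‖y‖ :=
    calc ‖q‖ ^ 2 = inner ℝ (q - V.starProjection q) y := by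
          rw [inner_sub_left, inner_right_of_mem_orthogonal (V.starProjection_apply_mem q) hy,
            sub_zero, ← real_inner_self_eq_norm_sq, inner_starProjection_left_eq_right,
            starProjection_eq_self_iff.mpr (W.starProjection_apply_mem y), real_inner_comm]
      _ ≤ ‖q - V.starProjection q‖ * ‖y‖ := real_inner_le_norm _ _
      _ ≤ grassDist V W * ‖q‖ * ‖y‖ := by
          grw [norm_sub_starProjection_le_grassDist_mul V (W.starProjection_apply_mem y),
            grassDist_comm]
  nlinarith [mul_nonneg (grassDist_nonneg V W) (norm_nonneg y), norm_nonneg q]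

lemma norm_starProjection_sub_le_grassDist (V W : Submodule ℝ H) [V.HasOrthogonalProjection]
    [W.HasOrthogonalProjection] : ‖V.starProjection - W.starProjection‖ ≤ grassDist V W := by
  refine ContinuousLinearMap.opNorm_le_bound _ (grassDist_nonneg V W) fun x => ?_
  set d := grassDist V W
  set a := V.starProjection x
  set b := x - a
  have ha : a ∈ V := V.starProjection_apply_mem x
  have hb : b ∈ Vᗮ := V.sub_starProjection_mem_orthogonal x
  have hsplit : a - W.starProjection x = (a - W.starProjection a) - W.starProjection b := by
    rw [← add_sub_cancel a x, map_add]
    abel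
  have horth : inner ℝ (a - W.starProjection a) (W.starProjection b) = 0 :=
    W.starProjection_inner_eq_zero a _ (W.starProjection_apply_mem b)
  have hsq : ‖a - W.starProjection x‖ * ‖a - W.starProjection x‖ ≤ (d * ‖x‖) * (d * ‖x‖) :=
    calc ‖a - W.starProjection x‖ * ‖a - W.starProjection x‖
        = ‖a - W.starProjection a‖ * ‖a - W.starProjection a‖
          + ‖W.starProjection b‖ * ‖W.starProjection b‖ := by
          rw [hsplit, norm_sub_sq_eq_norm_sq_add_norm_sq_real horth]
      _ ≤ (d * ‖a‖) * (d * ‖a‖) + (d * ‖b‖) * (d * ‖b‖) :=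
          add_le_add
            (mul_self_le_mul_self (norm_nonneg _) (norm_sub_starProjection_le_grassDist_mul W ha))
            (mul_self_le_mul_self (norm_nonneg _)
              (norm_starProjection_le_grassDist_mul_of_mem_orthogonal V W hb))
      _ = d * d * (‖a + b‖ * ‖a + b‖) := by
          rw [norm_add_sq_eq_norm_sq_add_norm_sq_real (inner_right_of_mem_orthogonal ha hb)]
          ring
      _ = (d * ‖x‖) * (d * ‖x‖) := by
          rw [add_sub_cancel]
          ring
  exact (mul_self_le_mul_self_iff (norm_nonneg _)
    (mul_nonneg (grassDist_nonneg V W) (norm_nonneg x))).2 hsq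

lemma exists_mem_dist_le_norm_starProjection_sub (V W : Submodule ℝ H)
    [V.HasOrthogonalProjection] [W.HasOrthogonalProjection] :
    ∀ v ∈ (V : Set H) ∩ closedBall 0 1, ∃ w ∈ (W : Set H) ∩ closedBall 0 1,
      dist v w ≤ ‖V.starProjection - W.starProjection‖ := by
  rintro v ⟨hv, hv₁⟩
  rw [mem_closedBall_zero_iff] at hv₁
  refine ⟨W.starProjection v, ⟨W.starProjection_apply_mem v, ?_⟩, ?_⟩
  · exact mem_closedBall_zero_iff.2 ((W.norm_starProjection_apply_le v).trans hv₁)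
  · calc dist v (W.starProjection v)
        = ‖(V.starProjection - W.starProjection) v‖ := by
          rw [dist_eq_norm, sub_apply, starProjection_eq_self_iff.mpr hv]
      _ ≤ ‖V.starProjection - W.starProjection‖ * ‖v‖ := ContinuousLinearMap.le_opNorm _ v
      _ ≤ ‖V.starProjection - W.starProjection‖ := mul_le_of_le_one_right (norm_nonneg _) hv₁

lemma grassDist_le_norm_starProjection_sub (V W : Submodule ℝ H) [V.HasOrthogonalProjection]
    [W.HasOrthogonalProjection] : grassDist V W ≤ ‖V.starProjection - W.starProjection‖ :=
  hausdorffDist_le_of_mem_dist (norm_nonneg _) (exists_mem_dist_le_norm_starProjection_sub V W)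
    (by simpa only [norm_sub_rev] using exists_mem_dist_le_norm_starProjection_sub W V)

theorem norm_starProjection_sub_eq_grassDist (V W : Submodule ℝ H) [V.HasOrthogonalProjection]
    [W.HasOrthogonalProjection] : ‖V.starProjection - W.starProjection‖ = grassDist V W :=
  (norm_starProjection_sub_le_grassDist V W).antisymm (grassDist_le_norm_starProjection_sub V W)

end Submodule

theorem orthogonalProjection_dist_vs_grassDist_general {H : Type} [NormedAddCommGroup H]
    [InnerProductSpace ℝ H]
    (V W : Submodule ℝ H) [CompleteSpace V] [CompleteSpace W] :
    (∀ x : H,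
        ‖(V.orthogonalProjectionOnto x : H) - (W.orthogonalProjectionOnto x : H)‖ ≤
          hausdorffDist ((V : Set H) ∩ closedBall 0 1)
            ((W : Set H) ∩ closedBall 0 1) * ‖x‖) ∧
      ∀ M : ℝ, 0 ≤ M →
        (∀ x : H, ‖x‖ = 1 →
          ‖(V.orthogonalProjectionOnto x : H) - (W.orthogonalProjectionOnto x : H)‖ ≤ M) →
        hausdorffDist ((V : Set H) ∩ closedBall 0 1)
          ((W : Set H) ∩ closedBall 0 1) ≤ M := by
  have hnorm := V.norm_starProjection_sub_eq_grassDist W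
  refine ⟨fun x => ?_, fun M hM hunit => ?_⟩
  · show _ ≤ V.grassDist W * ‖x‖
    rw [← hnorm]
    exact (V.starProjection - W.starProjection).le_opNorm x
  · show V.grassDist W ≤ M
    rw [← hnorm]
    exact ContinuousLinearMap.opNorm_le_of_unit_norm hM hunit

/-- In a Hilbert space, the operator distance between two orthogonal projections is
controlled by the Grassmannian distance of the subspaces, and conversely. -/
theorem orthogonalProjection_dist_vs_grassDist {H : Type} [NormedAddCommGroup H]
    [InnerProductSpace ℝ H] [CompleteSpace H]
    (V W : Submodule ℝ H) [CompleteSpace V] [CompleteSpace W] :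
    (∀ x : H,
        ‖(V.orthogonalProjectionOnto x : H) - (W.orthogonalProjectionOnto x : H)‖ ≤
          hausdorffDist ((V : Set H) ∩ closedBall 0 1)
            ((W : Set H) ∩ closedBall 0 1) * ‖x‖) ∧
      ∀ M : ℝ, 0 ≤ M →
        (∀ x : H, ‖x‖ = 1 →
          ‖(V.orthogonalProjectionOnto x : H) - (W.orthogonalProjectionOnto x : H)‖ ≤ M) →
        hausdorffDist ((V : Set H) ∩ closedBall 0 1)
          ((W : Set H) ∩ closedBall 0 1) ≤ M :=
  orthogonalProjection_dist_vs_grassDist_general V W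
end

section
/- Let X be a Hilbert space, V a closed k-dimensional subspace with orthogonal projection π, Ω ⊆ V, and g : Ω → V^⊥ a Lipschitz function with Lip(g) ≤ ε ≤ 1. Then for all x, y ∈ Ω, | ‖(x + g(x)) − (y + g(y))‖² − ‖x − y‖² | ≤ 8 ρ_X(4ε) ‖x − y‖², where ρ_X(t) = √(1+t²) − 1. In particular π restricted to the graph of g is a bi-Lipschitz equivalence onto Ω with bi-Lipschitz constant at most 1 + 8ρ_X(4ε). -/
/-!
Write `u = x - y ∈ V` and `w = g x - g y ∈ Vᗮ`. By Pythagoras the squared distance of the two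
graph points is `‖u‖² + ‖w‖²`, so the defect is exactly `‖w‖² ≤ ε² ‖u‖²`, quadratic in `ε`.
Since `ρ(t) = t² / (√(1 + t²) + 1)`, this is at most `8 ρ(4ε) ‖u‖²` as long as `ε ≤ 1`.
-/

open scoped RealInnerProductSpace

theorem sq_le_eight_mul_sqrt_one_add_sq_four_mul_sub_one {ε : ℝ} (hε : |ε| ≤ 1) :
    ε ^ 2 ≤ 8 * (√(1 + (4 * ε) ^ 2) - 1) := by
  set s := √(1 + (4 * ε) ^ 2)
  have hs : s ^ 2 = 1 + (4 * ε) ^ 2 := Real.sq_sqrt (by positivity)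
  have hε2 : ε ^ 2 ≤ 1 := (sq_le_one_iff_abs_le_one ε).mpr hε
  have hs1 : 1 ≤ s := Real.one_le_sqrt.mpr (le_add_of_nonneg_right (sq_nonneg _))
  have hs5 : s ≤ 5 := by nlinarith
  -- `16 ε² = (s - 1) (s + 1) ≤ 6 (s - 1)`
  nlinarith

section Orthogonal

variable {F : Type*} [NormedAddCommGroup F] [InnerProductSpace ℝ F] {u w : F} {δ : ℝ}

theorem norm_add_sq_of_inner_eq_zero (h : ⟪u, w⟫ = 0) : ‖u + w‖ ^ 2 = ‖u‖ ^ 2 + ‖w‖ ^ 2 := by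
  rw [norm_add_sq_real, h, mul_zero, add_zero]

theorem abs_norm_add_sq_sub_norm_sq_le (h : ⟪u, w⟫ = 0) (hw : ‖w‖ ^ 2 ≤ δ * ‖u‖ ^ 2) :
    |‖u + w‖ ^ 2 - ‖u‖ ^ 2| ≤ δ * ‖u‖ ^ 2 := by
  rwa [norm_add_sq_of_inner_eq_zero h, add_sub_cancel_left, abs_of_nonneg (sq_nonneg _)]

theorem norm_le_norm_add_of_inner_eq_zero (h : ⟪u, w⟫ = 0) : ‖u‖ ≤ ‖u + w‖ := by
  refine (sq_le_sq₀ (norm_nonneg _) (norm_nonneg _)).mp ?_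
  rw [norm_add_sq_of_inner_eq_zero h]
  exact le_add_of_nonneg_right (sq_nonneg _)

theorem norm_add_le_one_add_mul_norm_of_inner_eq_zero (h : ⟪u, w⟫ = 0) (hδ : 0 ≤ δ)
    (hw : ‖w‖ ^ 2 ≤ δ * ‖u‖ ^ 2) : ‖u + w‖ ≤ (1 + δ) * ‖u‖ := by
  refine (sq_le_sq₀ (norm_nonneg _) (by positivity)).mp ?_
  rw [norm_add_sq_of_inner_eq_zero h]
  nlinarith [mul_nonneg (sq_nonneg δ) (sq_nonneg ‖u‖)]

end Orthogonal

theorem hilbert_graph_bilipschitz_general {H : Type} [NormedAddCommGroup H]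
    [InnerProductSpace ℝ H]
    (V : Submodule ℝ H)
    (Ω : Set V) (g : V → H) (hg : ∀ x ∈ Ω, g x ∈ Vᗮ)
    (ε : ℝ) (hε0 : 0 ≤ ε) (hε1 : ε ≤ 1)
    (hLip : LipschitzOnWith (Real.toNNReal ε) g Ω) :
    ∀ x ∈ Ω, ∀ y ∈ Ω,
      |‖((x : H) + g x) - ((y : H) + g y)‖ ^ 2 - ‖(x : H) - (y : H)‖ ^ 2| ≤
          8 * (Real.sqrt (1 + (4 * ε) ^ 2) - 1) * ‖(x : H) - (y : H)‖ ^ 2 ∧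
      ‖((x : H) + g x) - ((y : H) + g y)‖ ≤
          (1 + 8 * (Real.sqrt (1 + (4 * ε) ^ 2) - 1)) * ‖(x : H) - (y : H)‖ ∧
      ‖(x : H) - (y : H)‖ ≤
          (1 + 8 * (Real.sqrt (1 + (4 * ε) ^ 2) - 1)) *
            ‖((x : H) + g x) - ((y : H) + g y)‖ := by
  intro x hx y hy
  set δ := 8 * (Real.sqrt (1 + (4 * ε) ^ 2) - 1)
  have hεδ : ε ^ 2 ≤ δ :=
    sq_le_eight_mul_sqrt_one_add_sq_four_mul_sub_one (abs_le.mpr ⟨by linarith, hε1⟩)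
  have hδ : 0 ≤ δ := (sq_nonneg ε).trans hεδ
  have horth : ⟪(x : H) - y, g x - g y⟫ = 0 :=
    V.inner_right_of_mem_orthogonal (V.sub_mem x.2 y.2) (Vᗮ.sub_mem (hg x hx) (hg y hy))
  have hlip : ‖g x - g y‖ ≤ ε * ‖(x : H) - y‖ := by
    simpa [dist_eq_norm, Real.coe_toNNReal ε hε0] using hLip.dist_le_mul x hx y hy
  have hw : ‖g x - g y‖ ^ 2 ≤ δ * ‖(x : H) - y‖ ^ 2 :=
    calc ‖g x - g y‖ ^ 2 ≤ (ε * ‖(x : H) - y‖) ^ 2 := pow_le_pow_left₀ (norm_nonneg _) hlip 2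
      _ = ε ^ 2 * ‖(x : H) - y‖ ^ 2 := mul_pow _ _ _
      _ ≤ δ * ‖(x : H) - y‖ ^ 2 := mul_le_mul_of_nonneg_right hεδ (sq_nonneg _)
  rw [add_sub_add_comm]
  exact ⟨abs_norm_add_sq_sub_norm_sq_le horth hw,
    norm_add_le_one_add_mul_norm_of_inner_eq_zero horth hδ hw,
    (norm_le_norm_add_of_inner_eq_zero horth).trans
      (le_mul_of_one_le_left (norm_nonneg _) (le_add_of_nonneg_right hδ))⟩

/-- Graphs over a subspace of a Hilbert space with small Lipschitz constant are
bi-Lipschitz equivalent to their base via the orthogonal projection, with a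
quadratic-type defect `8·ρ(4ε)` where `ρ(t) = √(1+t²) − 1`. -/
theorem hilbert_graph_bilipschitz {H : Type} [NormedAddCommGroup H]
    [InnerProductSpace ℝ H] [CompleteSpace H]
    (k : ℕ) (V : Submodule ℝ H) [FiniteDimensional ℝ V]
    (hV : Module.finrank ℝ V = k)
    (Ω : Set V) (g : V → H) (hg : ∀ x ∈ Ω, g x ∈ Vᗮ)
    (ε : ℝ) (hε0 : 0 ≤ ε) (hε1 : ε ≤ 1)
    (hLip : LipschitzOnWith (Real.toNNReal ε) g Ω) :
    ∀ x ∈ Ω, ∀ y ∈ Ω,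
      |‖((x : H) + g x) - ((y : H) + g y)‖ ^ 2 - ‖(x : H) - (y : H)‖ ^ 2| ≤
          8 * (Real.sqrt (1 + (4 * ε) ^ 2) - 1) * ‖(x : H) - (y : H)‖ ^ 2 ∧
      ‖((x : H) + g x) - ((y : H) + g y)‖ ≤
          (1 + 8 * (Real.sqrt (1 + (4 * ε) ^ 2) - 1)) * ‖(x : H) - (y : H)‖ ∧
      ‖(x : H) - (y : H)‖ ≤
          (1 + 8 * (Real.sqrt (1 + (4 * ε) ^ 2) - 1)) *
            ‖((x : H) + g x) - ((y : H) + g y)‖ :=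
  hilbert_graph_bilipschitz_general V Ω g hg ε hε0 hε1 hLip
end

section
/- Let {B_{3r}(x_i)}_{i∈I} be a collection of balls in a Banach space X such that every point of X belongs to at most Γ of the balls B_{3r}(x_i). Then there exist Lipschitz functions φ_i : X → [0,1] with supp φ_i ⊆ B_{3r}(x_i), Σ_i φ_i = 1 on ∪_i B_{2.5 r}(x_i), Σ_i φ_i ≤ 1 everywhere, and Lip(φ_i) ≤ γΓ/r for an absolute constant γ. -/
/-!
Give each index the plateau function of the distance to `x i` that is `1` on `B_{2.5r}(x i)`,
vanishes off `B_{3r}(x i)` and is linear in between; it is `2/r`-Lipschitz. At two points at most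
`2Γ` of these functions are nonzero, so their sum `S` is `4Γ/r`-Lipschitz. Dividing by `max S 1`
instead of `S` keeps everything defined and Lipschitz: `t ↦ (max t 1)⁻¹` is `1`-Lipschitz, and a
product of `[0,1]`-valued functions is Lipschitz with the sum of their constants, giving
`2/r + 4Γ/r ≤ 6Γ/r`. On the `2.5r`-balls `S ≥ 1`, so there the normalized sum is exactly `1`.
-/

open Metric Function NNReal

section Lipschitz

variable {X : Type*} [PseudoMetricSpace X]

theorem LipschitzWith.mul_of_norm_le_one {R : Type*} [SeminormedRing R] {f g : X → R}
    {Kf Kg : ℝ≥0} (hf : LipschitzWith Kf f) (hg : LipschitzWith Kg g) (hf1 : ∀ x, ‖f x‖ ≤ 1)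
    (hg1 : ∀ x, ‖g x‖ ≤ 1) : LipschitzWith (Kf + Kg) fun x => f x * g x := by
  refine LipschitzWith.of_dist_le_mul fun x y => ?_
  have hsplit : f x * g x - f y * g y = (f x - f y) * g x + f y * (g x - g y) := by
    noncomm_ring
  calc dist (f x * g x) (f y * g y)
      ≤ ‖f x - f y‖ * ‖g x‖ + ‖f y‖ * ‖g x - g y‖ := by
        rw [dist_eq_norm, hsplit]
        exact (norm_add_le _ _).trans (add_le_add (norm_mul_le _ _) (norm_mul_le _ _))
    _ ≤ dist (f x) (f y) + dist (g x) (g y) := by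
        rw [dist_eq_norm, dist_eq_norm]
        exact add_le_add (mul_le_of_le_one_right (norm_nonneg _) (hg1 x))
          (mul_le_of_le_one_left (norm_nonneg _) (hf1 y))
    _ ≤ Kf * dist x y + Kg * dist x y := add_le_add (hf.dist_le_mul x y) (hg.dist_le_mul x y)
    _ = ↑(Kf + Kg) * dist x y := by push_cast; ring

theorem dist_inv_inv_le_of_one_le_norm {𝕜 : Type*} [NormedDivisionRing 𝕜] {a b : 𝕜}
    (ha : 1 ≤ ‖a‖) (hb : 1 ≤ ‖b‖) : dist a⁻¹ b⁻¹ ≤ dist a b := by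
  rw [dist_inv_inv₀ (norm_pos_iff.1 (one_pos.trans_le ha)) (norm_pos_iff.1 (one_pos.trans_le hb))]
  exact div_le_self dist_nonneg (one_le_mul_of_one_le_of_one_le ha hb)

theorem LipschitzWith.inv_max_one {f : X → ℝ} {K : ℝ≥0} (hf : LipschitzWith K f) :
    LipschitzWith K fun x => (max (f x) 1)⁻¹ := by
  have hnorm : ∀ x, 1 ≤ ‖max (f x) 1‖ := fun x => by
    rw [Real.norm_of_nonneg (zero_le_one.trans (le_max_right _ _))]
    exact le_max_right _ _
  exact LipschitzWith.of_dist_le_mul fun x y =>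
    (dist_inv_inv_le_of_one_le_norm (hnorm x) (hnorm y)).trans ((hf.max_const 1).dist_le_mul x y)

theorem LipschitzWith.tsum_of_ncard_support_le {ι E : Type*} [SeminormedAddCommGroup E]
    {ψ : ι → X → E} {K : ℝ≥0} {N : ℕ} (hψ : ∀ i, LipschitzWith K (ψ i))
    (hfin : ∀ p, (support fun i => ψ i p).Finite)
    (hcard : ∀ p, (support fun i => ψ i p).ncard ≤ N) :
    LipschitzWith (2 * N * K) fun p => ∑' i, ψ i p := by
  classical
  refine LipschitzWith.of_dist_le_mul fun p q => ?_
  set s := (hfin p).toFinset ∪ (hfin q).toFinset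
  have hs : (s.card : ℝ) ≤ 2 * N := by
    have := (Finset.card_union_le _ _).trans (add_le_add
      ((Set.ncard_eq_toFinset_card _ (hfin p)).symm.trans_le (hcard p))
      ((Set.ncard_eq_toFinset_card _ (hfin q)).symm.trans_le (hcard q)))
    exact_mod_cast this.trans_eq (two_mul N).symm
  have hsum : ∀ p', (support fun i => ψ i p') ⊆ s → ∑' i, ψ i p' = ∑ i ∈ s, ψ i p' :=
    fun p' h => tsum_eq_sum fun i hi => notMem_support.1 fun h' => hi (h h')
  rw [hsum p fun i hi => Finset.mem_union_left _ ((hfin p).mem_toFinset.2 hi),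
    hsum q fun i hi => Finset.mem_union_right _ ((hfin q).mem_toFinset.2 hi)]
  calc dist (∑ i ∈ s, ψ i p) (∑ i ∈ s, ψ i q) ≤ ∑ _i ∈ s, K * dist p q :=
        dist_sum_sum_le_of_le s fun i _ => (hψ i).dist_le_mul p q
    _ = s.card * (K * dist p q) := by rw [Finset.sum_const, nsmul_eq_mul]
    _ ≤ 2 * N * (K * dist p q) := by gcongr
    _ = ↑(2 * N * K) * dist p q := by push_cast; ring

end Lipschitz

section Plateau

variable {X : Type*} [PseudoMetricSpace X] {a b : ℝ}

noncomputable def plateau (c : X) (a b : ℝ) (p : X) : ℝ :=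
  max 0 (min ((b - dist p c) / (b - a)) 1)

theorem plateau_mem_Icc (c p : X) : plateau c a b p ∈ Set.Icc 0 1 :=
  ⟨le_max_left _ _, max_le zero_le_one (min_le_right _ _)⟩

theorem plateau_eq_one {c p : X} (hab : a < b) (hp : dist p c ≤ a) : plateau c a b p = 1 := by
  have : 1 ≤ (b - dist p c) / (b - a) := (one_le_div (sub_pos.2 hab)).2 (by linarith)
  simp [plateau, min_eq_right this]

theorem support_plateau_subset (c : X) (hab : a ≤ b) : support (plateau c a b) ⊆ ball c b := by
  intro p hp
  by_contra hpb
  rw [mem_ball, not_lt] at hpb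
  have : (b - dist p c) / (b - a) ≤ 0 :=
    div_nonpos_of_nonpos_of_nonneg (by linarith) (sub_nonneg.2 hab)
  exact hp (max_eq_left ((min_le_left _ _).trans this))

theorem lipschitzWith_plateau (c : X) (hab : a < b) :
    LipschitzWith (Real.toNNReal (b - a)⁻¹) (plateau c a b) := by
  have hinner : LipschitzWith (Real.toNNReal (b - a)⁻¹) fun p => (b - dist p c) / (b - a) := by
    refine LipschitzWith.of_dist_le_mul fun p q => ?_
    rw [Real.coe_toNNReal _ (inv_nonneg.2 (sub_pos.2 hab).le), Real.dist_eq, div_sub_div_same,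
      abs_div, abs_of_pos (sub_pos.2 hab), div_eq_inv_mul]
    gcongr
    rw [sub_sub_sub_cancel_left, abs_sub_comm]
    exact abs_dist_sub_le p q c
  exact hinner.min_const 1 |>.const_max 0

end Plateau

section TruncNormalize

variable {X ι : Type*} (ψ : ι → X → ℝ)

noncomputable def truncNormalize (i : ι) (p : X) : ℝ :=
  ψ i p / max (∑' j, ψ j p) 1

variable {ψ}

theorem truncNormalize_mem_Icc {i : ι} {p : X} (hψ : ψ i p ∈ Set.Icc 0 1) :
    truncNormalize ψ i p ∈ Set.Icc 0 1 :=
  have hM : 0 < max (∑' j, ψ j p) 1 := zero_lt_one.trans_le (le_max_right _ _)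
  ⟨div_nonneg hψ.1 hM.le, (div_le_one hM).2 (hψ.2.trans (le_max_right _ _))⟩

theorem support_truncNormalize_subset (i : ι) : support (truncNormalize ψ i) ⊆ support (ψ i) :=
  fun p hp h => hp (by simp [truncNormalize, h])

theorem tsum_truncNormalize (p : X) :
    ∑' i, truncNormalize ψ i p = (∑' i, ψ i p) / max (∑' i, ψ i p) 1 :=
  tsum_div_const

theorem tsum_truncNormalize_le_one (p : X) : ∑' i, truncNormalize ψ i p ≤ 1 := by
  rw [tsum_truncNormalize, div_le_one (zero_lt_one.trans_le (le_max_right _ _))]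
  exact le_max_left _ _

theorem tsum_truncNormalize_eq_one {p : X} (hp : 1 ≤ ∑' i, ψ i p) :
    ∑' i, truncNormalize ψ i p = 1 := by
  rw [tsum_truncNormalize, max_eq_left hp, div_self (zero_lt_one.trans_le hp).ne']

theorem lipschitzWith_truncNormalize [PseudoMetricSpace X] {K K' : ℝ≥0}
    (hψ : ∀ i, LipschitzWith K (ψ i)) (hψ01 : ∀ i p, ψ i p ∈ Set.Icc 0 1)
    (hsum : LipschitzWith K' fun p => ∑' i, ψ i p) (i : ι) :
    LipschitzWith (K + K') (truncNormalize ψ i) := by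
  have hM : ∀ p, ‖(max (∑' i, ψ i p) 1)⁻¹‖ ≤ 1 := fun p => by
    rw [norm_inv, Real.norm_of_nonneg (zero_le_one.trans (le_max_right _ _))]
    exact inv_le_one_of_one_le₀ (le_max_right _ _)
  exact (hψ i).mul_of_norm_le_one hsum.inv_max_one
    (fun p => abs_le.2 ⟨by linarith [(hψ01 i p).1], (hψ01 i p).2⟩) hM

end TruncNormalize

/-- Truncated partition of unity subordinate to a family of balls with bounded
overlap, with Lipschitz constants `γ·Γ/r` for an absolute constant `γ`. -/
theorem truncated_partition_of_unity :
    ∃ γ : ℝ, 0 < γ ∧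
      ∀ (X : Type) [NormedAddCommGroup X] [NormedSpace ℝ X] [CompleteSpace X]
        (ι : Type) (x : ι → X) (r : ℝ), 0 < r → ∀ Γ : ℕ, 0 < Γ →
        (∀ p : X, {i : ι | p ∈ ball (x i) (3 * r)}.Finite) →
        (∀ p : X, {i : ι | p ∈ ball (x i) (3 * r)}.ncard ≤ Γ) →
        ∃ φ : ι → X → ℝ,
          (∀ i p, φ i p ∈ Set.Icc (0 : ℝ) 1) ∧
          (∀ i, Function.support (φ i) ⊆ ball (x i) (3 * r)) ∧
          (∀ p ∈ ⋃ i, ball (x i) (2.5 * r), ∑' i, φ i p = 1) ∧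
          (∀ p : X, ∑' i, φ i p ≤ 1) ∧
          (∀ i, LipschitzWith (Real.toNNReal (γ * Γ / r)) (φ i)) := by
  refine ⟨6, by norm_num, fun X _ _ _ ι x r hr Γ hΓ hfin hcard => ?_⟩
  set ψ : ι → X → ℝ := fun i => plateau (x i) (2.5 * r) (3 * r)
  have hab : 2.5 * r < 3 * r := by linarith
  have hsupp : ∀ p, (support fun i => ψ i p) ⊆ {i | p ∈ ball (x i) (3 * r)} :=
    fun p i hi => support_plateau_subset (x i) hab.le hi
  have hψ : ∀ i, LipschitzWith (Real.toNNReal (2 / r)) (ψ i) := fun i => by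
    simpa [show (3 * r - 2.5 * r)⁻¹ = 2 / r by ring] using lipschitzWith_plateau (x i) hab
  have hsum := LipschitzWith.tsum_of_ncard_support_le hψ (fun p => (hfin p).subset (hsupp p))
    fun p => (Set.ncard_le_ncard (hsupp p) (hfin p)).trans (hcard p)
  refine ⟨truncNormalize ψ, fun i p => truncNormalize_mem_Icc (plateau_mem_Icc _ _),
    fun i => (support_truncNormalize_subset i).trans (support_plateau_subset _ hab.le), ?_,
    tsum_truncNormalize_le_one, fun i => ?_⟩
  · rintro p ⟨_, ⟨i, rfl⟩, hp⟩
    refine tsum_truncNormalize_eq_one ?_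
    calc 1 = ψ i p := (plateau_eq_one hab (mem_ball.1 hp).le).symm
      _ ≤ ∑' j, ψ j p := (summable_of_hasFiniteSupport ((hfin p).subset (hsupp p))).le_tsum i
          fun j _ => (plateau_mem_Icc _ _).1
  · refine (lipschitzWith_truncNormalize hψ (fun _ _ => plateau_mem_Icc _ _) hsum i).weaken ?_
    have hΓ1 : (1 : ℝ) ≤ Γ := by exact_mod_cast hΓ
    rw [← NNReal.coe_le_coe]
    push_cast [Real.coe_toNNReal _ (by positivity : 0 ≤ 2 / r),
      Real.coe_toNNReal _ (by positivity : (0 : ℝ) ≤ 6 * Γ / r)]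
    calc 2 / r + 2 * Γ * (2 / r) = (1 + 2 * Γ) * (2 / r) := by ring
      _ ≤ 3 * Γ * (2 / r) := by gcongr; linarith
      _ = 6 * Γ / r := by ring
end

section
/- Let μ be a finite Borel measure on a Banach space X with μ(X ∖ B_1(0)) = 0, and suppose β^k_μ(x,r) = 0 for some ball, say β^k_μ(0,1) = 0. Then there exists a k-dimensional affine subspace p + V of X such that μ(B_1(0) ∖ (p + V)) = 0. -/
open Metric MeasureTheory
open scoped ENNReal NNReal

/-- The square of the `k`-dimensional Jones `β`-number of a measure `μ` at
center `x` and scale `r`. -/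
noncomputable def betaSq (k : ℕ) {X : Type} [NormedAddCommGroup X]
    [NormedSpace ℝ X] [MeasurableSpace X] (μ : Measure X) (x : X) (r : ℝ) : ℝ≥0∞ :=
  ⨅ (p : X) (V : Submodule ℝ X) (_ : Module.finrank ℝ V = k),
    (ENNReal.ofReal r ^ (k + 2))⁻¹ *
      ∫⁻ z in ball x r,
        ENNReal.ofReal ((Metric.infDist z ((fun w => p + w) '' (V : Set X))) ^ 2) ∂μ

/-!
Since the `β`-number vanishes, there are `k`-planes `p n + V n` with
`∫_{B₁} d(z, p n + V n)² dμ < 2⁻ⁿ`; summing over `n`, `d(z, p n + V n) → 0` for `μ`-a.e.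
`z ∈ B₁`. There is no compactness to extract a limit plane, but none is needed: if `z₀` and
`z₀ + v₁, …, z₀ + vₘ` are such limit points with `v` linearly independent, nearby points of
`p n + V n` give vectors of `V n` converging to `v`, which are eventually linearly independent
because linear independence is an open condition; hence `m ≤ k`. So the limit points, shifted
by `z₀`, span a space of dimension at most `k`, which is then enlarged to dimension `k`.
-/

open Filter Topology Module

namespace Submodule

variable {K V : Type*} [DivisionRing K] [AddCommGroup V] [Module K V]

theorem exists_le_le_finrank_eq {W U : Submodule K V} [FiniteDimensional K U] (hWU : W ≤ U)
    {k : ℕ} (hWk : finrank K W ≤ k) (hkU : k ≤ finrank K U) :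
    ∃ W' : Submodule K V, W ≤ W' ∧ W' ≤ U ∧ finrank K W' = k := by
  induction k, hWk using Nat.le_induction with
  | base => exact ⟨W, le_rfl, hWU, rfl⟩
  | succ n _ ih =>
    obtain ⟨W', hWW', hW'U, rfl⟩ := ih (by omega)
    obtain ⟨x, hxU, hxW'⟩ := SetLike.exists_of_lt <|
      lt_of_le_of_ne hW'U fun h => by subst h; omega
    have hle : W' ⊔ K ∙ x ≤ U := sup_le hW'U ((span_singleton_le_iff_mem x U).2 hxU)
    have : FiniteDimensional K W' := finiteDimensional_of_le hW'U
    have : FiniteDimensional K ↥(W' ⊔ K ∙ x) := finiteDimensional_of_le hle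
    have hlt : finrank K W' < finrank K ↥(W' ⊔ K ∙ x) := finrank_lt_finrank_of_lt <|
      SetLike.lt_iff_le_and_exists.2
        ⟨le_sup_left, x, mem_sup_right (mem_span_singleton_self x), hxW'⟩
    have hsup : finrank K ↥(W' ⊔ K ∙ x) ≤ finrank K W' + 1 := by
      have hx0 : x ≠ 0 := by rintro rfl; exact hxW' W'.zero_mem
      simpa only [finrank_span_singleton hx0] using finrank_add_le_finrank_add_finrank W' (K ∙ x)
    exact ⟨W' ⊔ K ∙ x, hWW'.trans le_sup_left, hle, by omega⟩

theorem finiteDimensional_span_of_card_le {T : Set V} {k : ℕ}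
    (hT : ∀ s : Finset V, ↑s ⊆ T → LinearIndependent K ((↑) : s → V) → s.card ≤ k) :
    FiniteDimensional K (span K T) ∧ finrank K (span K T) ≤ k := by
  obtain ⟨b, hbT, hspan, hb⟩ := exists_linearIndependent K T
  have hrank : Module.rank K (span K T) ≤ k := by
    rw [← hspan, rank_span_set hb]
    refine Cardinal.card_le_of fun s => ?_
    have hsT : ↑(s.map (Function.Embedding.subtype _)) ⊆ T := by
      rw [Finset.coe_map]
      rintro _ ⟨z, -, rfl⟩
      exact hbT z.2
    simpa using hT _ hsT (linearIndependent_finset_map_embedding_subtype _ hb s)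
  exact ⟨rank_lt_aleph0_iff.1 (hrank.trans_lt Cardinal.natCast_lt_aleph0),
    finrank_le_of_rank_le hrank⟩

end Submodule

theorem MeasureTheory.ae_tendsto_zero_of_tsum_lintegral_ne_top {α : Type*} [MeasurableSpace α]
    {μ : Measure α} {f : ℕ → α → ℝ≥0∞} (hf : ∀ n, AEMeasurable (f n) μ)
    (h : ∑' n, ∫⁻ a, f n a ∂μ ≠ ∞) : ∀ᵐ a ∂μ, Tendsto (fun n => f n a) atTop (𝓝 0) := by
  rw [← lintegral_tsum hf] at h
  filter_upwards [ae_lt_top' (AEMeasurable.tsum hf) h] with a ha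
  exact ENNReal.tendsto_atTop_zero_of_tsum_ne_top ha.ne

theorem tendsto_of_tendsto_ofReal_sq {α : Type*} {l : Filter α} {d : α → ℝ} (hd : ∀ a, 0 ≤ d a)
    (h : Tendsto (fun a => ENNReal.ofReal (d a ^ 2)) l (𝓝 0)) : Tendsto d l (𝓝 0) := by
  have := (Real.continuous_sqrt.tendsto 0).comp
    ((ENNReal.tendsto_toReal ENNReal.zero_ne_top).comp h)
  simpa [Function.comp_def, ENNReal.toReal_ofReal (sq_nonneg _), Real.sqrt_sq (hd _)] using this

theorem ae_tendsto_infDist_zero_of_lintegral_lt {α : Type*} [PseudoMetricSpace α]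
    [MeasurableSpace α] [OpensMeasurableSpace α] {μ : Measure α} {A : ℕ → Set α}
    (h : ∀ n, ∫⁻ z, ENNReal.ofReal (infDist z (A n) ^ 2) ∂μ < 2⁻¹ ^ n) :
    ∀ᵐ z ∂μ, Tendsto (fun n => infDist z (A n)) atTop (𝓝 0) := by
  have hsum : ∑' n, ∫⁻ z, ENNReal.ofReal (infDist z (A n) ^ 2) ∂μ ≠ ∞ :=
    ne_top_of_le_ne_top (by simp [ENNReal.tsum_geometric, ENNReal.one_sub_inv_two])
      (ENNReal.tsum_le_tsum fun n => (h n).le)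
  filter_upwards [ae_tendsto_zero_of_tsum_lintegral_ne_top (fun n => by fun_prop) hsum] with z hz
  exact tendsto_of_tendsto_ofReal_sq (fun _ => infDist_nonneg) hz

theorem exists_mem_tendsto_of_tendsto_infDist {α : Type*} [PseudoMetricSpace α]
    {A : ℕ → Set α} (hA : ∀ n, (A n).Nonempty) {z : α}
    (h : Tendsto (fun n => infDist z (A n)) atTop (𝓝 0)) :
    ∃ y : ℕ → α, (∀ n, y n ∈ A n) ∧ Tendsto y atTop (𝓝 z) := by
  have hlt (n : ℕ) : infDist z (A n) < infDist z (A n) + 1 / (n + 1) := by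
    linarith [Nat.one_div_pos_of_nat (α := ℝ) (n := n)]
  choose y hyA hy using fun n => (infDist_lt_iff (hA n)).1 (hlt n)
  refine ⟨y, hyA, tendsto_iff_dist_tendsto_zero.2 <| squeeze_zero (fun _ => dist_nonneg)
    (fun n => (dist_comm _ _).trans_le (hy n).le) ?_⟩
  simpa using h.add tendsto_one_div_add_atTop_nhds_zero_nat

section AffinePlanes

variable {𝕜 E : Type*} [NontriviallyNormedField 𝕜] [CompleteSpace 𝕜] [NormedAddCommGroup E]
  [NormedSpace 𝕜 E]

theorem card_le_of_tendsto_infDist_of_linearIndependent {ι : Type*} [Fintype ι] {k : ℕ}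
    (p : ℕ → E) (V : ℕ → Submodule 𝕜 E) [∀ n, FiniteDimensional 𝕜 (V n)]
    (hV : ∀ n, finrank 𝕜 (V n) ≤ k) {z₀ : E} {v : ι → E}
    (hz₀ : Tendsto (fun n => infDist z₀ ((p n + ·) '' (V n : Set E))) atTop (𝓝 0))
    (hv : ∀ i, Tendsto (fun n => infDist (z₀ + v i) ((p n + ·) '' (V n : Set E))) atTop (𝓝 0))
    (hli : LinearIndependent 𝕜 v) : Fintype.card ι ≤ k := by
  have hne (n : ℕ) : ((p n + ·) '' (V n : Set E)).Nonempty := ⟨_, 0, (V n).zero_mem, rfl⟩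
  obtain ⟨y₀, hy₀, hy₀z⟩ := exists_mem_tendsto_of_tendsto_infDist hne hz₀
  choose y hy hyz using fun i => exists_mem_tendsto_of_tendsto_infDist hne (hv i)
  have hmem (n : ℕ) (i : ι) : y i n - y₀ n ∈ V n := by
    obtain ⟨a, ha, hai⟩ := hy i n
    obtain ⟨b, hb, hb₀⟩ := hy₀ n
    rw [← hai, ← hb₀, add_sub_add_left_eq_sub]
    exact (V n).sub_mem ha hb
  have hconv : Tendsto (fun n i => y i n - y₀ n) atTop (𝓝 v) :=
    tendsto_pi_nhds.2 fun i => by simpa using (hyz i).sub hy₀z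
  obtain ⟨n, hn⟩ := (hconv.eventually hli.eventually).exists
  have hliV : LinearIndependent 𝕜 fun i => (⟨y i n - y₀ n, hmem n i⟩ : V n) :=
    LinearIndependent.of_comp (V n).subtype hn
  exact hliV.fintype_card_le_finrank.trans (hV n)

theorem exists_finrank_eq_setOf_tendsto_infDist_subset {k : ℕ} (p : ℕ → E)
    (V : ℕ → Submodule 𝕜 E) [∀ n, FiniteDimensional 𝕜 (V n)] (hV : ∀ n, finrank 𝕜 (V n) = k) :
    ∃ (q : E) (W : Submodule 𝕜 E), finrank 𝕜 W = k ∧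
      {z | Tendsto (fun n => infDist z ((p n + ·) '' (V n : Set E))) atTop (𝓝 0)} ⊆
        (q + ·) '' (W : Set E) := by
  set L := {z | Tendsto (fun n => infDist z ((p n + ·) '' (V n : Set E))) atTop (𝓝 0)}
  rcases L.eq_empty_or_nonempty with hL | ⟨z₀, hz₀⟩
  · exact ⟨p 0, V 0, hV 0, hL ▸ Set.empty_subset _⟩
  obtain ⟨hTfin, hTk⟩ := Submodule.finiteDimensional_span_of_card_le (K := 𝕜)
    (T := {v | z₀ + v ∈ L}) fun s hsT hs => by
      simpa using card_le_of_tendsto_infDist_of_linearIndependent p V (fun n => (hV n).le) hz₀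
        (fun i => hsT i.2) hs
  obtain ⟨W, hTW, -, hW⟩ := Submodule.exists_le_le_finrank_eq le_sup_left hTk
    ((hV 0).symm.le.trans (Submodule.finrank_mono le_sup_right))
  exact ⟨z₀, W, hW, fun z hz => ⟨z - z₀, hTW (Submodule.subset_span (by simpa using hz)), by simp⟩⟩

end AffinePlanes

theorem exists_lintegral_infDist_sq_lt_of_betaSq_eq_zero {X : Type} [NormedAddCommGroup X]
    [NormedSpace ℝ X] [MeasurableSpace X] {k : ℕ} {μ : Measure X} {x : X} {r : ℝ}
    (hβ : betaSq k μ x r = 0) {ε : ℝ≥0∞} (hε : 0 < ε) :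
    ∃ (p : X) (V : Submodule ℝ X), finrank ℝ V = k ∧
      ∫⁻ z in ball x r, ENNReal.ofReal (infDist z ((p + ·) '' (V : Set X)) ^ 2) ∂μ < ε := by
  set c := (ENNReal.ofReal r ^ (k + 2))⁻¹
  have hc : 0 < c * ε :=
    ENNReal.mul_pos (ENNReal.inv_ne_zero.2 (ENNReal.pow_ne_top ENNReal.ofReal_ne_top)) hε.ne'
  rw [← hβ, betaSq] at hc
  simp only [iInf_lt_iff] at hc
  obtain ⟨p, V, hV, hlt⟩ := hc
  exact ⟨p, V, hV, lt_of_not_ge fun hge => hlt.not_ge (mul_le_mul_right hge c)⟩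

theorem beta_zero_measure_on_plane_general {X : Type} [NormedAddCommGroup X]
    [NormedSpace ℝ X] [MeasurableSpace X] [BorelSpace X]
    (k : ℕ) (μ : Measure X)
    (hβ : betaSq k μ 0 1 = 0) :
    ∃ (p : X) (V : Submodule ℝ X), Module.finrank ℝ V = k ∧
      μ (ball 0 1 \ ((fun w => p + w) '' (V : Set X))) = 0 := by
  by_cases hX : k = 0 ∧ ¬FiniteDimensional ℝ X
  · obtain ⟨rfl, hX⟩ := hX
    -- `finrank` vanishes on infinite-dimensional spaces, so `⊤` is a `0`-dimensional plane.
    refine ⟨0, ⊤, by rw [finrank_top, finrank_of_infinite_dimensional hX], ?_⟩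
    simp
  choose p V hVk hV using fun n : ℕ => exists_lintegral_infDist_sq_lt_of_betaSq_eq_zero hβ
    (ENNReal.pow_pos (ENNReal.inv_pos.2 ENNReal.ofNat_ne_top) n : 0 < (2⁻¹ : ℝ≥0∞) ^ n)
  have (n : ℕ) : FiniteDimensional ℝ (V n) := by
    rcases Nat.eq_zero_or_pos k with rfl | hk
    · have : FiniteDimensional ℝ X := by tauto
      infer_instance
    · exact Module.finite_of_finrank_pos (hVk n ▸ hk)
  obtain ⟨q, W, hW, hLW⟩ := exists_finrank_eq_setOf_tendsto_infDist_subset p V hVk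
  have hae := ae_tendsto_infDist_zero_of_lintegral_lt (μ := μ.restrict (ball 0 1)) hV
  rw [ae_iff, Measure.restrict_apply' measurableSet_ball] at hae
  refine ⟨q, W, hW, measure_mono_null ?_ hae⟩
  rintro z ⟨hz, hzW⟩
  exact ⟨fun hzL => hzW (hLW hzL), hz⟩

/-- If the `β`-number of a finite Borel measure supported in the unit ball vanishes,
then the measure is concentrated (in the unit ball) on a single `k`-dimensional
affine subspace. -/
theorem beta_zero_measure_on_plane {X : Type} [NormedAddCommGroup X]
    [NormedSpace ℝ X] [CompleteSpace X] [MeasurableSpace X] [BorelSpace X]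
    (k : ℕ) (μ : Measure X) [IsFiniteMeasure μ]
    (hsupp : μ (Set.univ \ ball 0 1) = 0)
    (hβ : betaSq k μ 0 1 = 0) :
    ∃ (p : X) (V : Submodule ℝ X), Module.finrank ℝ V = k ∧
      μ (ball 0 1 \ ((fun w => p + w) '' (V : Set X))) = 0 :=
  beta_zero_measure_on_plane_general k μ hβ
end
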